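/- arXiv:0904.3350 — 9 statements merged into one kernel-verified Lean document; each statement's English description precedes it below -/
import Mathlib

section
/- Let S be a finitely generated subsemigroup of Z^n. Let G(S) be the group generated by S and Con(S) the smallest closed convex cone in R^n containing S. Then there exists an element g0 in S such that for every g in G(S) ∩ Con(S), the element g + g0 belongs to S. -/
/-!
A point `g` of `G(S) ∩ Con(S)` lies within distance `1` of a nonnegative real combination
`∑ cₐ • a` of the generators `a ∈ A`. Rounding the coefficients down writes `g = g' + f` with
`g'` in the monoid generated by `A` and `f ∈ G(S)` of sup-norm at most `1 + ∑ ‖a‖`.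
There are only finitely many such `f`, and each is a difference `p - q` of elements of `S`,
so `f + q ∈ S`; the sum of these `q`s is a valid `g₀`.
-/

open Filter Topology

/-- The smallest closed convex cone (with apex at the origin) containing a set `T`:
the closure of the set of all nonnegative linear combinations of elements of `T`. -/
def coneGen {V : Type*} [AddCommGroup V] [Module ℝ V] [TopologicalSpace V]
    (T : Set V) : Set V :=
  closure {x | ∃ (s : Finset V) (c : V → ℝ),
    (s : Set V) ⊆ T ∧ (∀ v ∈ s, 0 ≤ c v) ∧ x = ∑ v ∈ s, c v • v}

/-- The coercion of an integral point of `ℤ^n` into `ℝ^n`. -/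
def intCastVec {n : ℕ} (x : Fin n → ℤ) : Fin n → ℝ := fun i => (x i : ℝ)

open scoped NNReal

namespace AddSubsemigroup

variable {M : Type*}

theorem exists_sub_eq_of_mem_addSubgroupClosure [AddCommGroup M] (S : AddSubsemigroup M)
    (hS : (S : Set M).Nonempty) {x : M} (hx : x ∈ AddSubgroup.closure (S : Set M)) :
    ∃ p ∈ S, ∃ q ∈ S, p - q = x := by
  obtain ⟨s, hs⟩ := hS
  induction hx using AddSubgroup.closure_induction with
  | mem x hx => exact ⟨x + s, S.add_mem hx hs, s, hs, add_sub_cancel_right x s⟩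
  | zero => exact ⟨s, hs, s, hs, sub_self s⟩
  | add x y _ _ hx hy =>
    obtain ⟨p, hp, q, hq, rfl⟩ := hx
    obtain ⟨p', hp', q', hq', rfl⟩ := hy
    exact ⟨p + p', S.add_mem hp hp', q + q', S.add_mem hq hq', add_sub_add_comm p p' q q'⟩
  | neg x _ hx =>
    obtain ⟨p, hp, q, hq, rfl⟩ := hx
    exact ⟨q, hq, p, hp, (neg_sub p q).symm⟩

theorem exists_forall_add_mem_of_finite [AddCommSemigroup M] (S : AddSubsemigroup M)
    (hS : (S : Set M).Nonempty) {F : Set M} (hF : F.Finite)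
    (h : ∀ f ∈ F, ∃ t ∈ S, f + t ∈ S) : ∃ g₀ ∈ S, ∀ f ∈ F, f + g₀ ∈ S := by
  induction F, hF using Set.Finite.induction_on with
  | empty => exact hS.imp fun s hs => ⟨hs, by simp⟩
  | @insert f F _ _ ih =>
    obtain ⟨g₀, hg₀, hF⟩ := ih fun f' hf' => h f' (Set.mem_insert_of_mem f hf')
    obtain ⟨t, ht, hft⟩ := h f (Set.mem_insert f F)
    refine ⟨g₀ + t, S.add_mem hg₀ ht, Set.forall_mem_insert.2 ⟨?_, fun f' hf' => ?_⟩⟩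
    · rw [add_left_comm]; exact S.add_mem hg₀ hft
    · rw [← add_assoc]; exact S.add_mem (hF f' hf') ht

theorem add_mem_of_mem_addSubmonoidClosure [AddCommMonoid M] (S : AddSubsemigroup M) {x y : M}
    (hx : x ∈ AddSubmonoid.closure (S : Set M)) (hy : y ∈ S) : y + x ∈ S := by
  induction hx using AddSubmonoid.closure_induction generalizing y with
  | mem x hx => exact S.add_mem hy hx
  | zero => rwa [add_zero]
  | add x x' _ _ hx hx' => rw [← add_assoc]; exact hx' (hx hy)

end AddSubsemigroup

theorem norm_sub_sum_floor_smul_le {ι E : Type*} [Fintype ι] [SeminormedAddCommGroup E]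
    [NormedSpace ℝ E] (x : E) (c : ι → ℝ≥0) (v : ι → E) :
    ‖x - ∑ i, ⌊c i⌋₊ • v i‖ ≤ ‖x - ∑ i, c i • v i‖ + ∑ i, ‖v i‖ := by
  refine (norm_sub_le_norm_sub_add_norm_sub _ (∑ i, c i • v i) _).trans
    (add_le_add_right ?_ _)
  rw [← Finset.sum_sub_distrib]
  refine (norm_sum_le _ _).trans (Finset.sum_le_sum fun i _ => ?_)
  have hfrac : ‖(c i : ℝ) - ⌊c i⌋₊‖ ≤ 1 := by
    have hle : (⌊c i⌋₊ : ℝ) ≤ c i := by exact_mod_cast Nat.floor_le (c i).zero_le_coe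
    have hlt : (c i : ℝ) < ⌊c i⌋₊ + 1 := by exact_mod_cast Nat.lt_floor_add_one (c i)
    rw [Real.norm_eq_abs, abs_le]
    constructor <;> linarith
  calc ‖c i • v i - ⌊c i⌋₊ • v i‖ = ‖((c i : ℝ) - ⌊c i⌋₊) • v i‖ := by
        rw [sub_smul, NNReal.smul_def, Nat.cast_smul_eq_nsmul]
    _ ≤ ‖v i‖ := by
        rw [norm_smul]; exact mul_le_of_le_one_left (norm_nonneg _) hfrac

theorem coneGen_subset_closure_span {V : Type*} [AddCommGroup V] [Module ℝ V]
    [TopologicalSpace V] (T : Set V) :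
    coneGen T ⊆ closure (Submodule.span ℝ≥0 T : Set V) := by
  refine closure_mono ?_
  rintro x ⟨s, c, hsT, hc, rfl⟩
  exact Submodule.sum_mem _ fun v hv =>
    Submodule.smul_mem _ (⟨c v, hc v hv⟩ : ℝ≥0) (Submodule.subset_span (hsT hv))

section IntegralPoints

variable {n : ℕ}

def intCastVecHom : (Fin n → ℤ) →+ (Fin n → ℝ) where
  toFun := intCastVec
  map_zero' := by ext; simp [intCastVec]
  map_add' x y := by ext; simp [intCastVec]

@[simp]
theorem coe_intCastVecHom : ⇑(intCastVecHom (n := n)) = intCastVec := rfl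

@[simp]
theorem norm_intCastVec (x : Fin n → ℤ) : ‖intCastVec x‖ = ‖x‖ := by
  simp only [Pi.norm_def, intCastVec]
  rfl

theorem intCastVec_image_closure_subset_span (A : Set (Fin n → ℤ)) :
    intCastVec '' (AddSubsemigroup.closure A : Set (Fin n → ℤ)) ⊆
      Submodule.span ℝ≥0 (intCastVec '' A) := by
  rintro _ ⟨x, hx, rfl⟩
  induction hx using AddSubsemigroup.closure_induction with
  | mem x hx => exact Submodule.subset_span ⟨x, hx, rfl⟩
  | add x y _ _ hx hy =>
    rw [← coe_intCastVecHom, map_add]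
    exact add_mem hx hy

theorem exists_mem_addSubmonoidClosure_norm_sub_le (A : Finset (Fin n → ℤ)) {g : Fin n → ℤ}
    (hg : intCastVec g ∈
      coneGen (intCastVec '' (AddSubsemigroup.closure (A : Set (Fin n → ℤ)) : Set _))) :
    ∃ g' ∈ AddSubmonoid.closure (A : Set (Fin n → ℤ)), ‖g - g'‖ ≤ 1 + ∑ a ∈ A, ‖a‖ := by
  have hspan := closure_mono (Submodule.span_le.2 (intCastVec_image_closure_subset_span _))
    (coneGen_subset_closure_span _ hg)
  obtain ⟨y, hy, hgy⟩ := Metric.mem_closure_iff.1 hspan 1 one_pos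
  obtain ⟨c, rfl⟩ := (Submodule.mem_span_image_finset_iff_exists_fun ℝ≥0).1 hy
  refine ⟨∑ a : A, ⌊c a⌋₊ • (a : Fin n → ℤ),
    sum_mem fun a _ => nsmul_mem (AddSubmonoid.subset_closure a.2) _, ?_⟩
  rw [← norm_intCastVec, ← coe_intCastVecHom, map_sub, map_sum]
  simp only [map_nsmul, coe_intCastVecHom]
  calc _ ≤ dist (intCastVec g) (∑ a : A, c a • intCastVec (a : Fin n → ℤ)) +
        ∑ a : A, ‖intCastVec (a : Fin n → ℤ)‖ := by
        rw [dist_eq_norm]; exact norm_sub_sum_floor_smul_le _ c _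
    _ ≤ 1 + ∑ a ∈ A, ‖a‖ := by
        simp only [norm_intCastVec, Finset.sum_coe_sort A norm]
        linarith

end IntegralPoints

/-- if `S` is a finitely generated subsemigroup of `ℤ^n`, `G(S)` the group it
generates and `Con(S)` the smallest closed convex cone containing `S`, then there is
`g₀ ∈ S` with `g + g₀ ∈ S` for every `g ∈ G(S) ∩ Con(S)`. -/
theorem stmt0 {n : ℕ} (S : AddSubsemigroup (Fin n → ℤ))
    (hfg : ∃ A : Finset (Fin n → ℤ), A.Nonempty ∧
      AddSubsemigroup.closure (A : Set (Fin n → ℤ)) = S) :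
    ∃ g0 ∈ S, ∀ g : Fin n → ℤ,
      g ∈ AddSubgroup.closure (S : Set (Fin n → ℤ)) →
      intCastVec g ∈ coneGen (intCastVec '' (S : Set (Fin n → ℤ))) →
      g + g0 ∈ S := by
  obtain ⟨A, ⟨a₀, ha₀⟩, rfl⟩ := hfg
  set S := AddSubsemigroup.closure (A : Set (Fin n → ℤ))
  have hS : (S : Set (Fin n → ℤ)).Nonempty := ⟨a₀, AddSubsemigroup.subset_closure ha₀⟩
  set R := 1 + ∑ a ∈ A, ‖a‖
  set F := {f | f ∈ AddSubgroup.closure (S : Set (Fin n → ℤ)) ∧ ‖f‖ ≤ R}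
  have hF : F.Finite := (isCompact_closedBall 0 R).finite_of_discrete.subset
    fun f hf => mem_closedBall_zero_iff.2 hf.2
  obtain ⟨g₀, hg₀, hFg₀⟩ := S.exists_forall_add_mem_of_finite hS hF fun f hf => by
    obtain ⟨p, hp, q, hq, rfl⟩ := S.exists_sub_eq_of_mem_addSubgroupClosure hS hf.1
    exact ⟨q, hq, by rwa [sub_add_cancel]⟩
  refine ⟨g₀, hg₀, fun g hgG hgC => ?_⟩
  obtain ⟨g', hg', hgg'⟩ := exists_mem_addSubmonoidClosure_norm_sub_le A hgC
  replace hg' : g' ∈ AddSubmonoid.closure (S : Set (Fin n → ℤ)) :=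
    AddSubmonoid.closure_mono AddSubsemigroup.subset_closure hg'
  have hdiff : g - g' ∈ F :=
    ⟨sub_mem hgG (AddSubgroup.le_closure_toAddSubmonoid _ hg'), hgg'⟩
  rw [← sub_add_cancel g g', add_right_comm]
  exact S.add_mem_of_mem_addSubmonoidClosure hg' (hFg₀ _ hdiff)
end

section
/- Let S ⊆ Z^n be a semigroup, G(S) the group it generates, L(S) the real span of S, and Con(S) the closed convex cone generated by S. Let C′ ⊆ Con(S) be a closed strongly convex cone which intersects the boundary of Con(S) (in the topology of L(S)) only at the origin. Then there exists a constant N > 0 such that every point of G(S) lying in C′ whose Euclidean norm exceeds N belongs to S. -/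
/-!
A point of `C'` on the unit sphere lies in the relative interior of `Con(S)`, which is also the
relative interior of the (non-closed) cone of nonnegative combinations of `S`. Hence, inside
`L(S)`, a whole neighbourhood of it is spanned by finitely many elements of `S`, and by
compactness of the unit sphere of `C'` one finite `F ⊆ S` and one radius `δ` serve all of
these points.

Fix a finite `T ⊆ S` generating `G(S)` and put `v = ∑ T`. For `g ∈ G(S) ∩ C'` of large norm,
`g - η‖g‖ v` is then a nonnegative real combination of `F`; rounding all coefficients down gives
`g = ⌊η‖g‖⌋ v + r + (ℕ-combination of F)` with `r ∈ G(S)` of bounded norm. There are only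
finitely many such `r`, and `k v + r` lies in the monoid generated by `S` for all large `k`, so
`g` does too; since `g ≠ 0` and `S` is a semigroup, `g ∈ S`.
-/

open Filter Topology

/-- The coercion of an integral point of `ℤ^n` into Euclidean space `ℝ^n`. -/
def intCastEuc {n : ℕ} (x : Fin n → ℤ) : EuclideanSpace ℝ (Fin n) := WithLp.toLp 2 (fun i => (x i : ℝ))

open Set

section ConeGen

variable {V : Type*} [NormedAddCommGroup V] [NormedSpace ℝ V]

theorem coneGen_eq_closure_hull (T : Set V) :
    coneGen T = closure (PointedCone.hull ℝ T : Set V) := by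
  unfold coneGen
  congr 1
  ext x
  constructor
  · rintro ⟨s, c, hsT, hc, rfl⟩
    exact Submodule.sum_mem _ fun v hv =>
      PointedCone.smul_mem _ (hc v hv) (PointedCone.subset_hull (hsT hv))
  · intro hx
    obtain ⟨c, s, hsT, -, rfl⟩ := Submodule.mem_span_iff_exists_finset_subset.1 hx
    exact ⟨s, fun v => c v, hsT, fun v _ => (c v).2, rfl⟩

variable [FiniteDimensional ℝ V]

theorem coneGen_subset_span (T : Set V) : coneGen T ⊆ Submodule.span ℝ T := by
  rw [coneGen_eq_closure_hull]
  exact closure_minimal (PointedCone.hull_le_span ℝ T)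
    (Submodule.span ℝ T).closed_of_finiteDimensional

theorem affineSpan_coneGen (T : Set V) :
    affineSpan ℝ (coneGen T) = (Submodule.span ℝ T).toAffineSubspace := by
  refine le_antisymm (affineSpan_le.2 (coneGen_subset_span T)) fun x hx => ?_
  have hT : insert 0 T ⊆ coneGen T := by
    rw [coneGen_eq_closure_hull]
    exact (insert_subset (PointedCone.hull ℝ T).zero_mem PointedCone.subset_hull).trans
      subset_closure
  have hx : x ∈ (affineSpan ℝ (insert 0 T) : Set V) := by
    rw [affineSpan_insert_zero]; exact hx
  exact affineSpan_mono ℝ hT hx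

end ConeGen

theorem Convex.closure_mem_nhds_iff {E : Type*} [NormedAddCommGroup E] [NormedSpace ℝ E]
    [FiniteDimensional ℝ E] {P : Set E} (hP : Convex ℝ P) (hspan : affineSpan ℝ P = ⊤) {x : E} :
    closure P ∈ 𝓝 x ↔ P ∈ 𝓝 x := by
  rw [← mem_interior_iff_mem_nhds, ← mem_interior_iff_mem_nhds,
    hP.interior_closure_eq_interior_of_nonempty_interior
      (hP.interior_nonempty_iff_affineSpan_eq_top.2 hspan)]

theorem inter_sphere_subset_intrinsicInterior {V : Type*} [NormedAddCommGroup V]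
    [NormedSpace ℝ V] [FiniteDimensional ℝ V] {C K : Set V} (hCK : C ⊆ K)
    (hbd : ∀ x ∈ C ∩ intrinsicFrontier ℝ K, x = 0) :
    C ∩ Metric.sphere 0 1 ⊆ intrinsicInterior ℝ K := by
  rintro x ⟨hxC, hx1⟩
  rw [← closure_sdiff_intrinsicFrontier]
  exact ⟨subset_closure (hCK hxC), fun hx => ne_zero_of_mem_unit_sphere ⟨x, hx1⟩ (hbd x ⟨hxC, hx⟩)⟩

section Local

variable {V : Type*} [NormedAddCommGroup V] [NormedSpace ℝ V] [FiniteDimensional ℝ V]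

theorem exists_finset_hull_mem_nhdsWithin {T : Set V} {x : V}
    (hx : x ∈ intrinsicInterior ℝ (coneGen T)) :
    ∃ F : Finset V, ↑F ⊆ T ∧
      (PointedCone.hull ℝ (F : Set V) : Set V) ∈ 𝓝[Submodule.span ℝ T] x := by
  classical
  set L := Submodule.span ℝ T
  rw [intrinsicInterior, affineSpan_coneGen] at hx
  obtain ⟨⟨y, hyL⟩, hy, rfl⟩ := hx
  have hK : ((↑) ⁻¹' coneGen T : Set L) ∈ 𝓝 (⟨y, hyL⟩ : L) := mem_interior_iff_mem_nhds.1 hy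
  set P : Set L := (↑) ⁻¹' (PointedCone.hull ℝ T : Set V)
  have hPconv : Convex ℝ P := (PointedCone.hull ℝ T).convex.linear_preimage L.subtype
  have hPspan : affineSpan ℝ P = ⊤ := by
    have h0 : (0 : L) ∈ P := (PointedCone.hull ℝ T).zero_mem
    have hspan : Submodule.span ℝ P = ⊤ :=
      eq_top_mono (Submodule.span_mono (preimage_mono PointedCone.subset_hull))
        Submodule.span_span_coe_preimage
    rw [← AffineSubspace.coe_eq_univ_iff, ← insert_eq_of_mem h0, affineSpan_insert_zero, hspan,
      Submodule.top_coe]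
  have hclosure : closure P = (↑) ⁻¹' coneGen T := by
    rw [coneGen_eq_closure_hull, IsEmbedding.subtypeVal.closure_eq_preimage_closure_image,
      show Subtype.val '' P = _ from Subtype.image_preimage_coe _ _,
      inter_eq_right.2 (show (PointedCone.hull ℝ T : Set V) ⊆ L from PointedCone.hull_le_span ℝ T)]
  obtain ⟨b, hyb, hbP⟩ := exists_mem_interior_convexHull_affineBasis
    ((hPconv.closure_mem_nhds_iff hPspan).1 (hclosure ▸ hK))
  obtain ⟨F, hFT, hbF⟩ := Submodule.subset_span_finite_of_subset_span
    (t := Finset.univ.image fun i => (b i : V)) (s := T) (R := {c : ℝ // 0 ≤ c}) (by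
      rintro _ hv
      simp only [Finset.coe_image, Finset.coe_univ, image_univ] at hv
      obtain ⟨i, rfl⟩ := hv
      exact hbP (subset_convexHull ℝ _ (mem_range_self i)))
  refine ⟨F, hFT, ?_⟩
  have hbF' : convexHull ℝ (range b) ⊆ (↑) ⁻¹' (PointedCone.hull ℝ (F : Set V) : Set V) :=
    convexHull_min (range_subset_iff.2 fun i => hbF (by simp))
      ((PointedCone.hull ℝ (F : Set V)).convex.linear_preimage L.subtype)
  have := mem_nhds_subtype_iff_nhdsWithin.1
    (mem_of_superset (mem_interior_iff_mem_nhds.1 hyb) hbF')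
  exact mem_of_superset this (image_preimage_subset _ _)

theorem IsCompact.exists_finset_forall_dist_lt_mem_hull {T C : Set V} (hC : IsCompact C)
    (hCT : C ⊆ intrinsicInterior ℝ (coneGen T)) :
    ∃ F : Finset V, ↑F ⊆ T ∧ ∃ δ > 0, ∀ x ∈ C, ∀ w ∈ Submodule.span ℝ T, dist w x < δ →
      w ∈ PointedCone.hull ℝ (F : Set V) := by
  classical
  let U : {F : Finset V // ↑F ⊆ T} → Set V := fun F =>
    interior {w | w ∈ Submodule.span ℝ T → w ∈ PointedCone.hull ℝ (F : Set V)}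
  have : Nonempty {F : Finset V // ↑F ⊆ T} := ⟨⟨∅, by simp⟩⟩
  obtain ⟨⟨F, hFT⟩, hCU⟩ := hC.elim_directed_cover U (fun _ => isOpen_interior)
    (fun x hx => by
      obtain ⟨F, hFT, hF⟩ := exists_finset_hull_mem_nhdsWithin (hCT hx)
      exact mem_iUnion.2
        ⟨⟨F, hFT⟩, mem_interior_iff_mem_nhds.2 (mem_nhdsWithin_iff_eventually.1 hF)⟩)
    (by
      rintro ⟨F, hF⟩ ⟨G, hG⟩
      refine ⟨⟨F ∪ G, by simpa using ⟨hF, hG⟩⟩, ?_, ?_⟩ <;>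
        exact interior_mono fun w h hw => Submodule.span_mono (by simp) (h hw))
  obtain ⟨δ, hδ, hδU⟩ := hC.exists_thickening_subset_open isOpen_interior hCU
  exact ⟨F, hFT, δ, hδ, fun x hx w hw hwx =>
    interior_subset (hδU (Metric.mem_thickening_iff.2 ⟨x, hx, hwx⟩)) hw⟩

end Local

theorem sub_mul_norm_smul_mem_of_forall_dist_lt {V : Type*} [NormedAddCommGroup V]
    [NormedSpace ℝ V] {L : Submodule ℝ V} {H : PointedCone ℝ V} {C : Set V}
    (hC : ∀ x ∈ C, ∀ c : ℝ, 0 ≤ c → c • x ∈ C) {δ : ℝ}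
    (hH : ∀ y ∈ C ∩ Metric.sphere 0 1, ∀ w ∈ L, dist w y < δ → w ∈ H) {u : V} (hu : u ∈ L)
    {η : ℝ} (hη : 0 ≤ η) (hηu : ‖u‖ * η < δ) {z : V} (hz : z ∈ C) (hzL : z ∈ L) :
    z - (η * ‖z‖) • u ∈ H := by
  rcases eq_or_ne z 0 with rfl | hz0
  · simp
  have hy : ‖z‖⁻¹ • z - η • u ∈ H := by
    refine hH _ ⟨hC z hz _ (inv_nonneg.2 (norm_nonneg z)), ?_⟩ _
      (L.sub_mem (L.smul_mem _ hzL) (L.smul_mem _ hu)) ?_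
    · simp [norm_smul, hz0]
    · rwa [dist_eq_norm, sub_sub_cancel_left, norm_neg, norm_smul, Real.norm_of_nonneg hη,
        mul_comm]
  convert H.smul_mem (norm_nonneg z) hy using 1
  rw [smul_sub, smul_inv_smul₀ (norm_ne_zero_iff.2 hz0), smul_smul, mul_comm]

section Semigroup

variable {A : Type*}

theorem mem_of_mem_addSubmonoidClosure_of_ne_zero [AddMonoid A] {S : Set A}
    (hS : ∀ x ∈ S, ∀ y ∈ S, x + y ∈ S) {g : A} (hg : g ∈ AddSubmonoid.closure S) (hg0 : g ≠ 0) :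
    g ∈ S := by
  refine (?_ : g = 0 ∨ g ∈ S).resolve_left hg0
  clear hg0
  induction hg using AddSubmonoid.closure_induction with
  | mem x hx => exact .inr hx
  | zero => exact .inl rfl
  | add x y _ _ hx hy =>
    rcases hx with rfl | hx
    · simpa using hy
    rcases hy with rfl | hy
    · simpa using Or.inr hx
    exact .inr (hS x hx y hy)

variable [AddCommGroup A]

theorem exists_finset_subset_addSubgroupClosure_eq [IsNoetherian ℤ A] (S : Set A) :
    ∃ T : Finset A, ↑T ⊆ S ∧ AddSubgroup.closure (T : Set A) = AddSubgroup.closure S := by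
  obtain ⟨T, hTS, hT⟩ := (Submodule.fg_span_iff_fg_span_finset_subset S).1
    (IsNoetherian.noetherian (Submodule.span ℤ S))
  exact ⟨T, hTS, by rw [← Submodule.span_int_eq_addSubgroupClosure,
    ← Submodule.span_int_eq_addSubgroupClosure, hT]⟩

theorem eventually_nsmul_sum_add_mem_addSubmonoidClosure (T : Finset A) {r : A}
    (hr : r ∈ AddSubgroup.closure (T : Set A)) :
    ∀ᶠ k : ℕ in atTop, k • (∑ t ∈ T, t) + r ∈ AddSubmonoid.closure (T : Set A) := by
  classical
  set M := AddSubmonoid.closure (T : Set A)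
  have hsub : ∀ U ⊆ T, ∑ t ∈ U, t ∈ M := fun U hU =>
    M.sum_mem fun t ht => AddSubmonoid.subset_closure (hU ht)
  suffices ∃ k : ℕ, k • (∑ t ∈ T, t) + r ∈ M by
    obtain ⟨k, hk⟩ := this
    refine eventually_atTop.2 ⟨k, fun j hj => ?_⟩
    obtain ⟨i, rfl⟩ := Nat.exists_eq_add_of_le hj
    rw [add_comm k i, add_nsmul, add_assoc]
    exact M.add_mem (M.nsmul_mem (hsub T le_rfl) i) hk
  induction hr using AddSubgroup.closure_induction'' with
  | mem t ht => exact ⟨0, by simpa using AddSubmonoid.subset_closure ht⟩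
  | neg_mem t ht =>
    refine ⟨1, ?_⟩
    rw [one_nsmul, ← sub_eq_add_neg, ← Finset.sum_erase_eq_sub ht]
    exact hsub _ (Finset.erase_subset t T)
  | zero => exact ⟨0, by simp⟩
  | add a b _ _ ha hb =>
    obtain ⟨i, hi⟩ := ha
    obtain ⟨j, hj⟩ := hb
    refine ⟨i + j, ?_⟩
    convert M.add_mem hi hj using 1
    rw [add_nsmul]
    abel

end Semigroup

theorem norm_smul_sub_natFloor_smul_le {E : Type*} [SeminormedAddCommGroup E] [NormedSpace ℝ E]
    {c : ℝ} (hc : 0 ≤ c) (x : E) : ‖c • x - (⌊c⌋₊ : ℝ) • x‖ ≤ ‖x‖ := by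
  rw [← sub_smul, norm_smul, Real.norm_of_nonneg (sub_nonneg.2 (Nat.floor_le hc))]
  exact mul_le_of_le_one_left (norm_nonneg x) (by linarith [Nat.lt_floor_add_one c])

section Lattice

variable {n : ℕ}

def intCastEucHom (n : ℕ) : (Fin n → ℤ) →+ EuclideanSpace ℝ (Fin n) where
  toFun := intCastEuc
  map_zero' := by ext; simp [intCastEuc]
  map_add' _ _ := by ext; simp [intCastEuc]

@[simp]
theorem intCastEucHom_apply (g : Fin n → ℤ) : intCastEucHom n g = intCastEuc g := rfl

theorem norm_le_norm_intCastEuc (g : Fin n → ℤ) : ‖g‖ ≤ ‖intCastEuc g‖ :=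
  (pi_norm_le_iff_of_nonneg (norm_nonneg _)).2 fun i => by
    simpa [intCastEuc, Int.norm_eq_abs] using PiLp.norm_apply_le (intCastEuc g) i

theorem finite_setOf_norm_intCastEuc_le (B : ℝ) :
    {g : Fin n → ℤ | ‖intCastEuc g‖ ≤ B}.Finite :=
  (isCompact_closedBall (0 : Fin n → ℤ) B).finite_of_discrete.subset fun g hg =>
    mem_closedBall_zero_iff.2 ((norm_le_norm_intCastEuc g).trans hg)

theorem intCastEuc_mem_span_of_mem_addSubgroupClosure {S : Set (Fin n → ℤ)} {g : Fin n → ℤ}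
    (hg : g ∈ AddSubgroup.closure S) : intCastEuc g ∈ Submodule.span ℝ (intCastEuc '' S) := by
  have : AddSubgroup.closure S ≤ (Submodule.span ℝ (intCastEuc '' S)).toAddSubgroup.comap
      (intCastEucHom n) :=
    (AddSubgroup.closure_le _).2 fun g hg => Submodule.subset_span (mem_image_of_mem _ hg)
  exact this hg

theorem exists_forall_mem_addSubmonoidClosure_of_sub_smul_mem_hull {S : Set (Fin n → ℤ)}
    {v : Fin n → ℤ} (hv : v ∈ AddSubmonoid.closure S)
    (habs : ∀ r ∈ AddSubgroup.closure S, ∀ᶠ k : ℕ in atTop, k • v + r ∈ AddSubmonoid.closure S)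
    {F : Finset (Fin n → ℤ)} (hFS : ↑F ⊆ S) :
    ∃ Λ₀ : ℕ, ∀ g ∈ AddSubgroup.closure S, ∀ Λ : ℝ, Λ₀ ≤ Λ →
      intCastEuc g - Λ • intCastEuc v ∈ PointedCone.hull ℝ (intCastEuc '' (F : Set _)) →
        g ∈ AddSubmonoid.closure S := by
  set B := ‖intCastEuc v‖ + ∑ f ∈ F, ‖intCastEuc f‖
  have hR := (finite_setOf_norm_intCastEuc_le B).inter_of_right
    (AddSubgroup.closure S : Set (Fin n → ℤ))
  obtain ⟨k₀, hk₀⟩ := eventually_atTop.1 ((eventually_all_finite hR).2 fun r hr => habs r hr.1)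
  refine ⟨k₀, fun g hg Λ hΛ hmem => ?_⟩
  obtain ⟨c, hc⟩ := (Submodule.mem_span_image_finset_iff_exists_fun' _).1 hmem
  set m : (Fin n → ℤ) → ℕ := fun f => ⌊(c f : ℝ)⌋₊
  set r := g - ⌊Λ⌋₊ • v - ∑ f ∈ F, m f • f
  have hMG : AddSubmonoid.closure S ≤ (AddSubgroup.closure S).toAddSubmonoid :=
    AddSubmonoid.closure_le.2 AddSubgroup.subset_closure
  have hFM : ∑ f ∈ F, m f • f ∈ AddSubmonoid.closure S :=
    sum_mem fun f hf => nsmul_mem (AddSubmonoid.subset_closure (hFS hf)) _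
  have hrG : r ∈ AddSubgroup.closure S := sub_mem (sub_mem hg (nsmul_mem (hMG hv) _)) (hMG hFM)
  have hrB : ‖intCastEuc r‖ ≤ B := by
    have hr : intCastEuc r = (Λ • intCastEuc v - (⌊Λ⌋₊ : ℝ) • intCastEuc v) +
        ∑ f ∈ F, ((c f : ℝ) • intCastEuc f - (m f : ℝ) • intCastEuc f) := by
      have hc' : ∑ f ∈ F, (c f : ℝ) • intCastEuc f = intCastEuc g - Λ • intCastEuc v := hc
      rw [Finset.sum_sub_distrib, hc']
      simp only [r, ← intCastEucHom_apply, map_sub, map_nsmul, map_sum,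
        ← Nat.cast_smul_eq_nsmul ℝ]
      abel
    rw [hr]
    refine (norm_add_le _ _).trans (add_le_add ?_ ((norm_sum_le _ _).trans ?_))
    · exact norm_smul_sub_natFloor_smul_le (le_trans (Nat.cast_nonneg _) hΛ) _
    · exact Finset.sum_le_sum fun f _ => norm_smul_sub_natFloor_smul_le (c f).2 _
  have hg' : g = (⌊Λ⌋₊ • v + r) + ∑ f ∈ F, m f • f := by simp only [r]; abel
  rw [hg']
  exact add_mem (hk₀ _ (Nat.le_floor hΛ) r ⟨hrG, hrB⟩) hFM

end Lattice

theorem stmt1_general {n : ℕ} (S : Set (Fin n → ℤ))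
    (hS : ∀ x ∈ S, ∀ y ∈ S, x + y ∈ S)
    (C' : Set (EuclideanSpace ℝ (Fin n)))
    (hC'closed : IsClosed C')
    (hC'cone : ∀ x ∈ C', ∀ c : ℝ, 0 ≤ c → c • x ∈ C')
    (hsub : C' ⊆ coneGen (intCastEuc '' S))
    (hbd : ∀ x ∈ C' ∩ intrinsicFrontier ℝ (coneGen (intCastEuc '' S)), x = 0) :
    ∃ N : ℝ, 0 < N ∧ ∀ g : Fin n → ℤ,
      g ∈ AddSubgroup.closure S → intCastEuc g ∈ C' → N < ‖intCastEuc g‖ → g ∈ S := by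
  obtain ⟨F₀, hF₀, δ, hδ, hF⟩ :=
    ((isCompact_sphere 0 1).inter_left hC'closed).exists_finset_forall_dist_lt_mem_hull
      (inter_sphere_subset_intrinsicInterior hsub hbd)
  obtain ⟨F, hFS, rfl⟩ := Finset.subset_set_image_iff.1 hF₀
  rw [Finset.coe_image] at hF
  obtain ⟨T, hTS, hTG⟩ := exists_finset_subset_addSubgroupClosure_eq S
  obtain ⟨Λ₀, hΛ₀⟩ := exists_forall_mem_addSubmonoidClosure_of_sub_smul_mem_hull
    (sum_mem fun t ht => AddSubmonoid.subset_closure (hTS ht))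
    (fun r hr => (eventually_nsmul_sum_add_mem_addSubmonoidClosure T (hTG ▸ hr)).mono
      fun _ hk => AddSubmonoid.closure_mono hTS hk) hFS
  set u := intCastEuc (∑ t ∈ T, t)
  have hu : u ∈ Submodule.span ℝ (intCastEuc '' S) :=
    intCastEuc_mem_span_of_mem_addSubgroupClosure
      (sum_mem fun t ht => AddSubgroup.subset_closure (hTS ht))
  obtain ⟨η, hη, hηu⟩ := exists_pos_mul_lt hδ ‖u‖
  refine ⟨(Λ₀ + 1) / η, by positivity, fun g hg hgC hgN => ?_⟩
  have hgΛ : Λ₀ + 1 < η * ‖intCastEuc g‖ := by rwa [div_lt_iff₀ hη, mul_comm] at hgN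
  refine mem_of_mem_addSubmonoidClosure_of_ne_zero hS (hΛ₀ g hg _ (by linarith)
    (sub_mul_norm_smul_mem_of_forall_dist_lt hC'cone hF hu hη.le hηu hgC
      (intCastEuc_mem_span_of_mem_addSubgroupClosure hg))) ?_
  rintro rfl
  rw [← intCastEucHom_apply, map_zero, norm_zero, mul_zero] at hgΛ
  linarith [Nat.cast_nonneg (α := ℝ) Λ₀]

/-- approximation theorem: let `S ⊆ ℤ^n` be a semigroup, `G(S)` the group it
generates and `Con(S)` the closed convex cone it generates.  If `C'` is a closed strongly
convex cone contained in `Con(S)` meeting the boundary of `Con(S)` (in the topology of the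
span `L(S)`, i.e. the intrinsic frontier) only at the origin, then there is `N > 0` such
that every point of `G(S)` lying in `C'` of Euclidean norm larger than `N` belongs to `S`. -/
theorem stmt1 {n : ℕ} (S : Set (Fin n → ℤ))
    (hS : ∀ x ∈ S, ∀ y ∈ S, x + y ∈ S)
    (C' : Set (EuclideanSpace ℝ (Fin n)))
    (hC'closed : IsClosed C') (hC'convex : Convex ℝ C')
    (hC'cone : ∀ x ∈ C', ∀ c : ℝ, 0 ≤ c → c • x ∈ C')
    (hC'line : ∀ x ∈ C', -x ∈ C' → x = 0)
    (hsub : C' ⊆ coneGen (intCastEuc '' S))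
    (hbd : ∀ x ∈ C' ∩ intrinsicFrontier ℝ (coneGen (intCastEuc '' S)), x = 0) :
    ∃ N : ℝ, 0 < N ∧ ∀ g : Fin n → ℤ,
      g ∈ AddSubgroup.closure S → intCastEuc g ∈ C' → N < ‖intCastEuc g‖ → g ∈ S :=
  stmt1_general S hS C' hC'closed hC'cone hsub hbd
end

section
/- Let B be a closed ball of radius √n centered at a point a in R^n, and let A = B ∩ Z^n. Then (1) the point a belongs to the convex hull of A, and (2) the subgroup of Z^n generated by the differences x − y with x, y ∈ A is all of Z^n. -/
open Set Metric

lemma EuclideanSpace.dist_le_sqrt_card_of_forall_dist_le_one {ι : Type*} [Fintype ι]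
    {x y : EuclideanSpace ℝ ι} (h : ∀ i, dist (x i) (y i) ≤ 1) :
    dist x y ≤ √(Fintype.card ι) := by
  rw [EuclideanSpace.dist_eq]
  gcongr
  calc ∑ i, dist (x i) (y i) ^ 2 ≤ ∑ _i : ι, (1 : ℝ) :=
        Finset.sum_le_sum fun i _ => pow_le_one₀ dist_nonneg (h i)
    _ = Fintype.card ι := by simp

lemma Pi.addSubgroupClosure_range_single_one (ι : Type*) [Finite ι] [DecidableEq ι] :
    AddSubgroup.closure (range fun i : ι => Pi.single i (1 : ℤ)) = ⊤ := by
  have := Fintype.ofFinite ι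
  refine eq_top_iff.2 fun z _ => ?_
  rw [← Finset.univ_sum_single z]
  refine AddSubgroup.sum_mem _ fun i _ => ?_
  simpa [← Pi.single_smul] using AddSubgroup.zsmul_mem _
    (AddSubgroup.subset_closure (mem_range_self (f := fun i : ι => Pi.single i (1 : ℤ)) i)) (z i)

def floorCube {ι : Type*} (a : ι → ℝ) : Set (ι → ℤ) :=
  {x | ∀ i, x i = ⌊a i⌋ ∨ x i = ⌊a i⌋ + 1}

section floorCube

variable {ι : Type*} {a : ι → ℝ}

lemma floor_mem_floorCube : (fun i => ⌊a i⌋) ∈ floorCube a := fun _ => Or.inl rfl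

lemma floor_add_single_mem_floorCube [DecidableEq ι] (i : ι) :
    (fun j => ⌊a j⌋) + Pi.single i 1 ∈ floorCube a := by
  intro j
  by_cases h : j = i
  · subst h; simp
  · simp [h]

lemma dist_le_one_of_mem_floorCube {x : ι → ℤ} (hx : x ∈ floorCube a) (i : ι) :
    dist (x i : ℝ) (a i) ≤ 1 := by
  have := Int.floor_le (a i)
  have := Int.lt_floor_add_one (a i)
  rw [Real.dist_eq, abs_le]
  rcases hx i with h | h <;> rw [h] <;> push_cast <;> constructor <;> linarith

lemma pi_subset_image_floorCube :
    univ.pi (fun i => ({(⌊a i⌋ : ℝ), (⌊a i⌋ : ℝ) + 1} : Set ℝ)) ⊆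
      (fun (x : ι → ℤ) i => (x i : ℝ)) '' floorCube a := by
  intro v hv
  have : ∀ i, ∃ k : ℤ, (k = ⌊a i⌋ ∨ k = ⌊a i⌋ + 1) ∧ (k : ℝ) = v i := fun i => by
    rcases hv i trivial with h | h
    exacts [⟨_, Or.inl rfl, h.symm⟩, ⟨_, Or.inr rfl, by push_cast; exact (mem_singleton_iff.1 h).symm⟩]
  choose x hx hxv using this
  exact ⟨x, hx, funext hxv⟩

lemma mem_convexHull_floorCube [Finite ι] (a : ι → ℝ) :
    a ∈ convexHull ℝ ((fun (x : ι → ℤ) i => (x i : ℝ)) '' floorCube a) := by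
  refine convexHull_mono pi_subset_image_floorCube (mem_convexHull_pi fun i _ => ?_)
  rw [convexHull_pair, segment_eq_Icc (by linarith)]
  exact ⟨Int.floor_le _, (Int.lt_floor_add_one _).le⟩

end floorCube

lemma floorCube_subset_closedBall {n : ℕ} (a : EuclideanSpace ℝ (Fin n)) :
    floorCube a ⊆ {x | intCastEuc x ∈ closedBall a √n} := fun _ hx => by
  simpa using EuclideanSpace.dist_le_sqrt_card_of_forall_dist_le_one
    (x := intCastEuc _) (y := a) (dist_le_one_of_mem_floorCube hx)

lemma mem_convexHull_intCastEuc_floorCube {n : ℕ} (a : EuclideanSpace ℝ (Fin n)) :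
    a ∈ convexHull ℝ (intCastEuc '' floorCube a) := by
  have := mem_image_of_mem (WithLp.linearEquiv 2 ℝ (Fin n → ℝ)).symm.toLinearMap
    (mem_convexHull_floorCube a.ofLp)
  rwa [LinearMap.image_convexHull, ← image_comp] at this

/-- let `B` be the closed ball of radius `√n` centered at `a ∈ ℝ^n` and
`A = B ∩ ℤ^n`.  Then (1) `a` lies in the convex hull of `A`, and (2) the subgroup of `ℤ^n`
generated by the differences `x - y`, `x, y ∈ A`, is all of `ℤ^n`. -/
theorem stmt2 {n : ℕ} (a : EuclideanSpace ℝ (Fin n))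
    (A : Set (Fin n → ℤ))
    (hA : A = {x : Fin n → ℤ | intCastEuc x ∈ Metric.closedBall a (Real.sqrt n)}) :
    a ∈ convexHull ℝ (intCastEuc '' A) ∧
      AddSubgroup.closure {d : Fin n → ℤ | ∃ x ∈ A, ∃ y ∈ A, d = x - y} = ⊤ := by
  have hcube : floorCube a ⊆ A := hA ▸ floorCube_subset_closedBall a
  refine ⟨convexHull_mono (image_mono hcube) (mem_convexHull_intCastEuc_floorCube a), ?_⟩
  rw [eq_top_iff, ← Pi.addSubgroupClosure_range_single_one]
  refine AddSubgroup.closure_mono ?_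
  rintro _ ⟨i, rfl⟩
  exact ⟨_, hcube (floor_add_single_mem_floorCube i), _, hcube floor_mem_floorCube, by simp⟩
end

section
/- Let C ⊆ R^{q+1} be a closed strongly convex cone contained in the half-space x_{q+1} ≥ 0, meeting the hyperplane x_{q+1} = 0 only at the origin, and let Δ = C ∩ {x_{q+1} = 1}. Let f: R^{q+1} → R be a polynomial of degree d with top-degree homogeneous component f^{(d)}. Then lim_{k→∞} (1/k^{q+d}) Σ_{x ∈ C ∩ Z^{q+1}, x_{q+1} = k} f(x) = ∫_Δ f^{(d)}(x) dμ, where dμ is the q-dimensional Lebesgue measure on the hyperplane x_{q+1} = 1. -/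
/-!
Scaling by `1/k` identifies the integer points of `C` at level `k` with the points of the slice
`Δ` on the lattice `k⁻¹ ℤ^q`, and the homogeneous component `f⁽ʲ⁾` picks up the factor `k ^ j`.
So the sum is `∑_{j ≤ d} k ^ j` times a Riemann sum of `f⁽ʲ⁾(·, 1)` over `Δ`, which is
`k ^ q (∫_Δ f⁽ʲ⁾ + o(1))`: `Δ` is convex, hence has a null frontier, and bounded, because a
closed cone on which `x_{q+1}` is positive away from `0` lies in some cone `x_{q+1} ≥ ε ‖x‖`.
After division by `k ^ (q + d)` only the term `j = d` survives.
-/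

open Filter Topology MeasureTheory

namespace MvPolynomial

variable {σ R : Type*} [CommSemiring R]

theorem IsHomogeneous.eval_smul {p : MvPolynomial σ R} {n : ℕ} (hp : p.IsHomogeneous n)
    (c : R) (x : σ → R) : eval (c • x) p = c ^ n * eval x p := by
  simp only [eval_eq, Finset.mul_sum]
  refine Finset.sum_congr rfl fun e he ↦ ?_
  have hdeg : ∑ i ∈ e.support, e i = n := (hp.degree_eq_sum_deg_support he).symm
  simp only [Pi.smul_apply, smul_eq_mul, mul_pow, Finset.prod_mul_distrib,
    Finset.prod_pow_eq_pow_sum, hdeg]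
  ring

theorem eval_smul_eq_sum_homogeneousComponent {p : MvPolynomial σ R} {d : ℕ}
    (hp : p.totalDegree ≤ d) (c : R) (x : σ → R) :
    eval (c • x) p = ∑ j ∈ Finset.range (d + 1), c ^ j * eval x (homogeneousComponent j p) := by
  have hsum : ∑ j ∈ Finset.range (d + 1), homogeneousComponent j p = p := by
    refine (Finset.sum_subset (Finset.range_subset_range.mpr (by omega)) fun j _ hj ↦ ?_).symm.trans
      (sum_homogeneousComponent p)
    exact homogeneousComponent_eq_zero j p (by simpa using hj)
  conv_lhs => rw [← hsum, map_sum]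
  exact Finset.sum_congr rfl fun j _ ↦ (homogeneousComponent_isHomogeneous j p).eval_smul c x

end MvPolynomial

theorem exists_pos_mul_norm_le_of_isClosed_cone {E : Type*} [NormedAddCommGroup E]
    [NormedSpace ℝ E] [ProperSpace E] {C : Set E} (hC : IsClosed C)
    (hcone : ∀ x ∈ C, ∀ c : ℝ, 0 ≤ c → c • x ∈ C) (ℓ : E →L[ℝ] ℝ)
    (hpos : ∀ x ∈ C, x ≠ 0 → 0 < ℓ x) : ∃ ε > 0, ∀ x ∈ C, ε * ‖x‖ ≤ ℓ x := by
  have hsphere : ∀ x ∈ C ∩ Metric.sphere 0 1, 0 < ℓ x := fun x hx ↦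
    hpos x hx.1 (ne_zero_of_mem_unit_sphere ⟨x, hx.2⟩)
  obtain ⟨ε, hε, hεle⟩ :=
    ((isCompact_sphere 0 1).inter_left hC).exists_forall_le' ℓ.continuous.continuousOn hsphere
  refine ⟨ε, hε, fun x hx ↦ ?_⟩
  rcases eq_or_ne x 0 with rfl | hx0
  · simp
  have hunit : ‖x‖⁻¹ • x ∈ C ∩ Metric.sphere 0 1 :=
    ⟨hcone x hx _ (by positivity), by simp [norm_smul, hx0]⟩
  have hεx := hεle _ hunit
  rwa [map_smul, smul_eq_mul, le_inv_mul_iff₀ (norm_pos_iff.mpr hx0), mul_comm] at hεx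

theorem tendsto_sum_range_pow_mul_div_pow {a : ℕ → ℕ → ℝ} {L : ℕ → ℝ} {q d : ℕ}
    (ha : ∀ j ≤ d, Tendsto (fun k : ℕ ↦ a j k / (k : ℝ) ^ q) atTop (𝓝 (L j))) :
    Tendsto (fun k : ℕ ↦ (∑ j ∈ Finset.range (d + 1), (k : ℝ) ^ j * a j k) / (k : ℝ) ^ (q + d))
      atTop (𝓝 (L d)) := by
  have hlim : Tendsto
      (fun k : ℕ ↦ ∑ j ∈ Finset.range (d + 1), ((k : ℝ)⁻¹) ^ (d - j) * (a j k / (k : ℝ) ^ q))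
      atTop (𝓝 (∑ j ∈ Finset.range (d + 1), if j = d then L j else 0)) := by
    refine tendsto_finsetSum _ fun j hj ↦ ?_
    rw [Finset.mem_range] at hj
    rcases eq_or_ne j d with rfl | hjd
    · simpa using ha j le_rfl
    · have hpow : Tendsto (fun k : ℕ ↦ ((k : ℝ)⁻¹) ^ (d - j)) atTop (𝓝 0) := by
        simpa [zero_pow (by omega : d - j ≠ 0)] using
          ((tendsto_inv_atTop_zero (𝕜 := ℝ)).comp tendsto_natCast_atTop_atTop).pow (d - j)
      simpa [hjd] using hpow.mul (ha j (by omega))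
  rw [Finset.sum_ite_eq', if_pos (Finset.self_mem_range_succ d)] at hlim
  refine hlim.congr' ?_
  filter_upwards [eventually_ne_atTop 0] with k hk
  rw [Finset.sum_div]
  refine Finset.sum_congr rfl fun j hj ↦ ?_
  rw [show q + d = j + (d - j) + q by grind, pow_add, pow_add, inv_pow]
  field_simp

open Pointwise in
theorem Bornology.IsBounded.finite_inter_inv_smul_span {ι : Type*} [Fintype ι]
    {s : Set (ι → ℝ)} (hs : Bornology.IsBounded s) {n : ℕ} (hn : n ≠ 0) :
    (s ∩ (n : ℝ)⁻¹ • (Submodule.span ℤ (Set.range (Pi.basisFun ℝ ι)) : Set (ι → ℝ))).Finite := by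
  rw [← Submodule.coe_pointwise_smul, ZSpan.smul _ (inv_ne_zero (Nat.cast_ne_zero.mpr hn))]
  exact ZSpan.setFinite_inter _ hs

section Slice

variable {q : ℕ}

/-- The slice `Δ = C ∩ {x_{q+1} = t}`, in the coordinates `x_1, …, x_q`. -/
def coneSlice (C : Set (Fin (q + 1) → ℝ)) (t : ℝ) : Set (Fin q → ℝ) :=
  {y | Fin.snoc y t ∈ C}

variable {C : Set (Fin (q + 1) → ℝ)}

theorem continuous_snoc_const (t : ℝ) :
    Continuous fun y : Fin q → ℝ ↦ (Fin.snoc y t : Fin (q + 1) → ℝ) :=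
  Continuous.finSnoc (A := fun _ ↦ ℝ) continuous_id continuous_const

theorem IsClosed.coneSlice (hC : IsClosed C) (t : ℝ) : IsClosed (coneSlice C t) :=
  hC.preimage (continuous_snoc_const t)

theorem Convex.coneSlice (hC : Convex ℝ C) (t : ℝ) : Convex ℝ (coneSlice C t) := by
  intro y hy z hz a b ha hb hab
  have hsnoc : (Fin.snoc (a • y + b • z) t : Fin (q + 1) → ℝ)
      = a • (Fin.snoc y t : Fin (q + 1) → ℝ) + b • Fin.snoc z t := by
    ext i
    refine Fin.lastCases ?_ (fun j ↦ ?_) i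
    · simp [← add_mul, hab]
    · simp
  change Fin.snoc _ t ∈ C
  rw [hsnoc]
  exact hC hy hz ha hb hab

theorem isBounded_coneSlice (hC : IsClosed C) (hcone : ∀ x ∈ C, ∀ c : ℝ, 0 ≤ c → c • x ∈ C)
    (hhalf : ∀ x ∈ C, 0 ≤ x (Fin.last q)) (hlevel : ∀ x ∈ C, x (Fin.last q) = 0 → x = 0)
    (t : ℝ) : Bornology.IsBounded (coneSlice C t) := by
  obtain ⟨ε, hε, hεle⟩ := exists_pos_mul_norm_le_of_isClosed_cone hC hcone
    (ContinuousLinearMap.proj (Fin.last q)) fun x hx hx0 ↦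
      (hhalf x hx).lt_of_ne fun h ↦ hx0 (hlevel x hx h.symm)
  refine (Metric.isBounded_iff_subset_closedBall 0).mpr ⟨t / ε, fun y hy ↦ ?_⟩
  have hy' : ε * ‖(Fin.snoc y t : Fin (q + 1) → ℝ)‖ ≤ t := by simpa using hεle _ hy
  have hnorm : ‖y‖ ≤ ‖(Fin.snoc y t : Fin (q + 1) → ℝ)‖ :=
    (pi_norm_le_iff_of_nonneg (norm_nonneg _)).mpr fun i ↦ by
      simpa using norm_le_pi_norm (Fin.snoc y t : Fin (q + 1) → ℝ) i.castSucc
  rw [mem_closedBall_zero_iff, le_div_iff₀ hε]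
  nlinarith

theorem intCast_eq_smul_snoc {x : Fin (q + 1) → ℤ} {k : ℕ} (hk : k ≠ 0)
    (hx : x (Fin.last q) = k) :
    (fun i ↦ (x i : ℝ)) = (k : ℝ) • Fin.snoc (fun i ↦ (x i.castSucc : ℝ) / k) 1 := by
  ext i
  refine Fin.lastCases ?_ (fun j ↦ ?_) i
  · simp [hx]
  · simp [mul_div_cancel₀ _ (Nat.cast_ne_zero.mpr hk : (k : ℝ) ≠ 0)]

open Pointwise BoxIntegral.unitPartition in
/-- The lattice `k⁻¹ ℤ^q` is written as Mathlib's `tendsto_tsum_div_pow_atTop_integral` takes it. -/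
theorem tsum_levelPoints_eq_tsum_coneSlice (hcone : ∀ x ∈ C, ∀ c : ℝ, 0 ≤ c → c • x ∈ C)
    (k : ℕ) [NeZero k] (F : (Fin (q + 1) → ℝ) → ℝ) :
    ∑' x : {x : Fin (q + 1) → ℤ // (fun i ↦ (x i : ℝ)) ∈ C ∧ x (Fin.last q) = k},
        F (fun i ↦ (x.1 i : ℝ))
      = ∑' y : ↥(coneSlice C 1 ∩ (k : ℝ)⁻¹ •
          (Submodule.span ℤ (Set.range (Pi.basisFun ℝ (Fin q))) : Set (Fin q → ℝ))),
        F ((k : ℝ) • Fin.snoc y.1 1) := by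
  have hk : (k : ℝ) ≠ 0 := NeZero.ne _
  have hsmul (x : {x : Fin (q + 1) → ℤ // (fun i ↦ (x i : ℝ)) ∈ C ∧ x (Fin.last q) = k}) :=
    intCast_eq_smul_snoc (NeZero.ne k) x.2.2
  let φ (x : {x : Fin (q + 1) → ℤ // (fun i ↦ (x i : ℝ)) ∈ C ∧ x (Fin.last q) = k}) :
      ↥(coneSlice C 1 ∩ (k : ℝ)⁻¹ •
          (Submodule.span ℤ (Set.range (Pi.basisFun ℝ (Fin q))) : Set (Fin q → ℝ))) :=
    ⟨fun i ↦ (x.1 i.castSucc : ℝ) / k, by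
      refine ⟨?_, mem_smul_span_iff.mpr fun i ↦ ⟨x.1 i.castSucc, by field_simp; simp⟩⟩
      have hscaled := hcone _ x.2.1 (k : ℝ)⁻¹ (by positivity)
      rwa [hsmul x, smul_smul, inv_mul_cancel₀ hk, one_smul] at hscaled⟩
  have hφ_inj : Function.Injective φ := fun x x' h ↦ by
    have hcast := (hsmul x).trans ((congrArg (fun y ↦ (k : ℝ) • Fin.snoc y.1 (1 : ℝ)) h).trans
      (hsmul x').symm)
    exact Subtype.ext <| funext fun i ↦ Int.cast_injective (congrFun hcast i)
  have hφ_surj : Function.Surjective φ := by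
    rintro ⟨y, hyC, hyL⟩
    choose a ha using mem_smul_span_iff.mp hyL
    have hcast : (fun i ↦ ((Fin.snoc a (k : ℤ) : Fin (q + 1) → ℤ) i : ℝ))
        = (k : ℝ) • Fin.snoc y 1 := by
      ext i
      refine Fin.lastCases ?_ (fun j ↦ ?_) i
      · simp
      · simpa using ha j
    refine ⟨⟨Fin.snoc a k, hcast ▸ hcone _ hyC _ (Nat.cast_nonneg k), by simp⟩, ?_⟩
    ext i
    have hai : (a i : ℝ) = k * y i := ha i
    simp [φ, hai, hk]
  rw [← (Equiv.ofBijective φ ⟨hφ_inj, hφ_surj⟩).tsum_eq]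
  exact tsum_congr fun x ↦ congrArg F (hsmul x)

end Slice

theorem stmt4_general {q : ℕ} (C : Set (Fin (q + 1) → ℝ))
    (hclosed : IsClosed C) (hconvex : Convex ℝ C)
    (hcone : ∀ x ∈ C, ∀ c : ℝ, 0 ≤ c → c • x ∈ C)
    (hhalf : ∀ x ∈ C, 0 ≤ x (Fin.last q))
    (hlevel : ∀ x ∈ C, x (Fin.last q) = 0 → x = 0)
    (f : MvPolynomial (Fin (q + 1)) ℝ) (d : ℕ) (hdeg : f.totalDegree ≤ d) :
    Tendsto (fun k : ℕ =>
        (∑' x : {x : Fin (q + 1) → ℤ //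
            (fun i => (x i : ℝ)) ∈ C ∧ x (Fin.last q) = (k : ℤ)},
          MvPolynomial.eval (fun i => ((x : Fin (q + 1) → ℤ) i : ℝ)) f) / (k : ℝ) ^ (q + d))
      atTop
      (𝓝 (∫ y in {y : Fin q → ℝ | Fin.snoc y (1 : ℝ) ∈ C},
            MvPolynomial.eval (Fin.snoc y (1 : ℝ)) (MvPolynomial.homogeneousComponent d f))) := by
  have hΔ : Bornology.IsBounded (coneSlice C 1) := isBounded_coneSlice hclosed hcone hhalf hlevel 1
  have hriemann (j : ℕ) := tendsto_tsum_div_pow_atTop_integral (coneSlice C 1)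
    (fun y ↦ MvPolynomial.eval (Fin.snoc y (1 : ℝ)) (MvPolynomial.homogeneousComponent j f))
    ((MvPolynomial.continuous_eval _).comp (continuous_snoc_const 1)) hΔ
    (hclosed.coneSlice 1).measurableSet ((hconvex.coneSlice 1).addHaar_frontier volume)
  simp only [Fintype.card_fin] at hriemann
  refine (tendsto_sum_range_pow_mul_div_pow fun j _ ↦ hriemann j).congr' ?_
  filter_upwards [eventually_ne_atTop 0] with k hk
  have : NeZero k := ⟨hk⟩
  have := (hΔ.finite_inter_inv_smul_span hk).to_subtype
  rw [tsum_levelPoints_eq_tsum_coneSlice hcone k (MvPolynomial.eval · f)]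
  simp_rw [MvPolynomial.eval_smul_eq_sum_homogeneousComponent hdeg]
  rw [Summable.tsum_finsetSum fun j _ ↦ .of_finite]
  simp_rw [tsum_mul_left]

/-- let `C ⊆ ℝ^{q+1}` be a closed strongly convex full-dimensional cone
contained in the half-space `x_{q+1} ≥ 0`, meeting `x_{q+1} = 0` only at the origin,
and let `Δ = C ∩ {x_{q+1} = 1}`.  For a polynomial `f` of degree (at most) `d` with
top-degree homogeneous component `f⁽ᵈ⁾`, the sums of `f` over the integral points of `C`
at level `k`, divided by `k^{q+d}`, tend to `∫_Δ f⁽ᵈ⁾ dμ`,  `μ` being the `q`-dimensional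
Lebesgue measure on the hyperplane `x_{q+1} = 1`. -/
theorem stmt4 {q : ℕ} (C : Set (Fin (q + 1) → ℝ))
    (hclosed : IsClosed C) (hconvex : Convex ℝ C)
    (hcone : ∀ x ∈ C, ∀ c : ℝ, 0 ≤ c → c • x ∈ C)
    (hline : ∀ x ∈ C, -x ∈ C → x = 0)
    (hdim : Submodule.span ℝ C = ⊤)
    (hhalf : ∀ x ∈ C, 0 ≤ x (Fin.last q))
    (hlevel : ∀ x ∈ C, x (Fin.last q) = 0 → x = 0)
    (f : MvPolynomial (Fin (q + 1)) ℝ) (d : ℕ) (hdeg : f.totalDegree ≤ d) :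
    Tendsto (fun k : ℕ =>
        (∑' x : {x : Fin (q + 1) → ℤ //
            (fun i => (x i : ℝ)) ∈ C ∧ x (Fin.last q) = (k : ℤ)},
          MvPolynomial.eval (fun i => ((x : Fin (q + 1) → ℤ) i : ℝ)) f) / (k : ℝ) ^ (q + d))
      atTop
      (𝓝 (∫ y in {y : Fin q → ℝ | Fin.snoc y (1 : ℝ) ∈ C},
            MvPolynomial.eval (Fin.snoc y (1 : ℝ)) (MvPolynomial.homogeneousComponent d f))) :=
  stmt4_general C hclosed hconvex hcone hhalf hlevel f d hdeg
end

section
/- Let v: V \ {0} → I be a prevaluation on a finite-dimensional vector space V over a field k. For α ∈ I let V_α = {f ∈ V : f = 0 or v(f) ≥ α} and let the leaf of v at α be the quotient V_α / ⋃_{β > α} V_β. Then the leaf is nonzero for only finitely many α, and the sum over all α ∈ I of the dimensions of the leaves equals dim V. -/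
variable {k V I : Type*} [Field k] [AddCommGroup V] [Module k V] [LinearOrder I]

/-- For a prevaluation `v` on `V`, the subspace `V_α = {f | f = 0 ∨ v f ≥ α}`. -/
def levelSubmodule (v : V → I)
    (hadd : ∀ f g : V, f ≠ 0 → g ≠ 0 → f + g ≠ 0 → min (v f) (v g) ≤ v (f + g))
    (hsmul : ∀ (c : k) (f : V), c ≠ 0 → f ≠ 0 → v (c • f) = v f)
    (α : I) : Submodule k V where
  carrier := {f | f = 0 ∨ α ≤ v f}
  zero_mem' := Or.inl rfl
  add_mem' := by
    intro a b ha hb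
    simp only [Set.mem_setOf_eq] at *
    rcases ha with rfl | ha
    · simpa using hb
    rcases hb with rfl | hb
    · simpa using Or.inr ha
    by_cases ha0 : a = 0
    · subst ha0; simpa using Or.inr hb
    by_cases hb0 : b = 0
    · subst hb0; simpa using Or.inr ha
    by_cases hab : a + b = 0
    · exact Or.inl hab
    · exact Or.inr (le_trans (le_min ha hb) (hadd a b ha0 hb0 hab))
  smul_mem' := by
    intro c f hf
    simp only [Set.mem_setOf_eq] at *
    rcases hf with rfl | hf
    · exact Or.inl (smul_zero c)
    by_cases hc : c = 0
    · subst hc; exact Or.inl (zero_smul k f)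
    by_cases hf0 : f = 0
    · subst hf0; exact Or.inl (smul_zero c)
    · exact Or.inr (by rw [hsmul c f hc hf0]; exact hf)

/-- The leaf of a prevaluation above `α`: the quotient `V_α / ⋃_{β > α} V_β`. -/
abbrev leafQuot (v : V → I)
    (hadd : ∀ f g : V, f ≠ 0 → g ≠ 0 → f + g ≠ 0 → min (v f) (v g) ≤ v (f + g))
    (hsmul : ∀ (c : k) (f : V), c ≠ 0 → f ≠ 0 → v (c • f) = v f)
    (α : I) :=
  (levelSubmodule v hadd hsmul α) ⧸
    ((⨆ β ∈ {β : I | α < β}, levelSubmodule v hadd hsmul β).comap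
      (levelSubmodule v hadd hsmul α).subtype)

/-- Abstract telescoping lemma over a finite linearly ordered index set. -/
private lemma tele_aux (d r : I → ℕ) :
    ∀ (n : ℕ) (s : Finset I), s.card ≤ n →
      (∀ γ ∈ s, (∀ γ' ∈ s, ¬ γ < γ') → d γ = r γ) →
      (∀ γ ∈ s, ∀ γ' ∈ s, γ < γ' → (∀ γ'' ∈ s, γ < γ'' → γ' ≤ γ'') → d γ + r γ' = r γ) →
      ∀ γ₀ ∈ s, (∀ γ ∈ s, γ₀ ≤ γ) → ∑ γ ∈ s, d γ = r γ₀ := by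
  intro n
  induction n with
  | zero =>
    intro s hs _ _ γ₀ hγ₀ _
    rw [Nat.le_zero, Finset.card_eq_zero] at hs
    simp [hs] at hγ₀
  | succ n ih =>
    intro s hs hmax hnext γ₀ hγ₀ hmin
    rw [← Finset.add_sum_erase _ _ hγ₀]
    rcases (s.erase γ₀).eq_empty_or_nonempty with he | hne
    · rw [he, Finset.sum_empty, Nat.add_zero]
      refine hmax γ₀ hγ₀ fun γ' hγ' hlt => ?_
      have : γ' ∈ s.erase γ₀ := Finset.mem_erase.2 ⟨ne_of_gt hlt, hγ'⟩
      simp [he] at this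
    · set γ₁ := (s.erase γ₀).min' hne with hγ₁
      have hγ₁mem : γ₁ ∈ s.erase γ₀ := Finset.min'_mem _ hne
      have hγ₁s : γ₁ ∈ s := Finset.mem_of_mem_erase hγ₁mem
      have h01 : γ₀ < γ₁ :=
        lt_of_le_of_ne (hmin _ hγ₁s) (Ne.symm (Finset.ne_of_mem_erase hγ₁mem))
      have hkey : d γ₀ + r γ₁ = r γ₀ := by
        refine hnext γ₀ hγ₀ γ₁ hγ₁s h01 fun γ'' h'' hlt => ?_
        exact Finset.min'_le _ _ (Finset.mem_erase.2 ⟨ne_of_gt hlt, h''⟩)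
      have hcard : (s.erase γ₀).card ≤ n := by
        have := Finset.card_erase_of_mem hγ₀
        omega
      have hrec : ∑ γ ∈ s.erase γ₀, d γ = r γ₁ := by
        refine ih (s.erase γ₀) hcard ?_ ?_ γ₁ hγ₁mem ?_
        · intro γ hγ hno
          refine hmax γ (Finset.mem_of_mem_erase hγ) fun γ' hγ' hlt => ?_
          rcases eq_or_ne γ' γ₀ with rfl | hne'
          · exact absurd (lt_of_le_of_lt (hmin γ (Finset.mem_of_mem_erase hγ)) hlt)
              (lt_irrefl _)
          · exact hno γ' (Finset.mem_erase.2 ⟨hne', hγ'⟩) hlt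
        · intro γ hγ γ' hγ' hlt hmin'
          refine hnext γ (Finset.mem_of_mem_erase hγ) γ' (Finset.mem_of_mem_erase hγ') hlt
            fun γ'' h'' hlt' => ?_
          have hne'' : γ'' ≠ γ₀ := by
            intro h; subst h
            exact absurd (lt_of_le_of_lt (hmin γ (Finset.mem_of_mem_erase hγ)) hlt')
              (lt_irrefl _)
          exact hmin' γ'' (Finset.mem_erase.2 ⟨hne'', h''⟩) hlt'
        · intro γ hγ
          exact Finset.min'_le _ _ hγ
      rw [hrec, hkey]

/-- for a prevaluation `v` on a finite-dimensional vector space `V`, the leaf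
`V_α / ⋃_{β > α} V_β` is nonzero for only finitely many `α`, and the sum of the dimensions
of the leaves equals `dim V`. -/
theorem stmt6 [FiniteDimensional k V] (v : V → I)
    (hadd : ∀ f g : V, f ≠ 0 → g ≠ 0 → f + g ≠ 0 → min (v f) (v g) ≤ v (f + g))
    (hsmul : ∀ (c : k) (f : V), c ≠ 0 → f ≠ 0 → v (c • f) = v f) :
    {α : I | Module.finrank k (leafQuot v hadd hsmul α) ≠ 0}.Finite ∧
      ∑ᶠ α : I, Module.finrank k (leafQuot v hadd hsmul α) = Module.finrank k V := by
  classical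
  -- abbreviations
  let W : I → Submodule k V := levelSubmodule v hadd hsmul
  let U : I → Submodule k V := fun α => ⨆ β ∈ {β : I | α < β}, W β
  let d : I → ℕ := fun α => Module.finrank k (leafQuot v hadd hsmul α)
  let r : I → ℕ := fun α => Module.finrank k (W α)
  have mem_W : ∀ (f : V) (α : I), f ∈ W α ↔ f = 0 ∨ α ≤ v f := fun f α => Iff.rfl
  have W_mono : ∀ {α β : I}, α ≤ β → W β ≤ W α := by
    intro α β h f hf
    rcases (mem_W f β).1 hf with rfl | hf'
    · exact (W α).zero_mem
    · exact (mem_W f α).2 (Or.inr (le_trans h hf'))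
  have U_le_W : ∀ α : I, U α ≤ W α := fun α =>
    iSup₂_le fun β hβ => W_mono (le_of_lt hβ)
  -- the key rank identity
  have key : ∀ α : I, d α + Module.finrank k (U α) = r α := by
    intro α
    have h2 : Module.finrank k ((U α).comap (W α).subtype) = Module.finrank k (U α) :=
      (Submodule.comapSubtypeEquivOfLe (U_le_W α)).finrank_eq
    have h1 := Submodule.finrank_quotient_add_finrank ((U α).comap (W α).subtype)
    rw [h2] at h1
    exact h1
  -- finiteness of the range of W
  have hfin : (Set.range W).Finite := by
    have hinj : Set.InjOn (fun M : Submodule k V => Module.finrank k M) (Set.range W) := by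
      rintro _ ⟨a, rfl⟩ _ ⟨b, rfl⟩ h
      rcases le_total a b with hab | hab
      · exact (Submodule.eq_of_le_of_finrank_eq (W_mono hab) h.symm).symm
      · exact Submodule.eq_of_le_of_finrank_eq (W_mono hab) h
    refine Set.Finite.of_finite_image ?_ hinj
    refine Set.Finite.subset (Set.finite_Iic (Module.finrank k V)) ?_
    rintro _ ⟨_, ⟨a, rfl⟩, rfl⟩
    exact Submodule.finrank_le _
  -- the set of values is finite
  have hΓfin : (v '' {f : V | f ≠ 0}).Finite := by
    refine Set.Finite.of_finite_image (f := W) ?_ ?_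
    · refine hfin.subset ?_
      rintro _ ⟨_, ⟨f, hf, rfl⟩, rfl⟩
      exact ⟨v f, rfl⟩
    · rintro _ ⟨f, hf, rfl⟩ _ ⟨g, hg, rfl⟩ h
      simp only [Set.mem_setOf_eq] at hf hg
      by_contra hne
      rcases lt_or_gt_of_ne hne with hlt | hlt
      · have hfm : f ∈ W (v f) := (mem_W f (v f)).2 (Or.inr le_rfl)
        rw [h] at hfm
        rcases (mem_W f (v g)).1 hfm with rfl | hge
        · exact hf rfl
        · exact absurd hge (not_le.2 hlt)
      · have hgm : g ∈ W (v g) := (mem_W g (v g)).2 (Or.inr le_rfl)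
        rw [← h] at hgm
        rcases (mem_W g (v f)).1 hgm with rfl | hge
        · exact hg rfl
        · exact absurd hge (not_le.2 hlt)
  let ΓF : Finset I := hΓfin.toFinset
  have hvmem : ∀ f : V, f ≠ 0 → v f ∈ ΓF := fun f hf =>
    hΓfin.mem_toFinset.2 ⟨f, hf, rfl⟩
  -- U is ⊥ at maximal values
  have hUbot : ∀ γ : I, (∀ γ' ∈ ΓF, ¬ γ < γ') → U γ = ⊥ := by
    intro γ hmax
    refine le_bot_iff.1 (iSup₂_le fun β hβ => ?_)
    intro f hf
    by_cases hf0 : f = 0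
    · simp [hf0]
    rcases (mem_W f β).1 hf with h0 | hge
    · exact absurd h0 hf0
    · exact absurd (lt_of_lt_of_le hβ hge) (hmax (v f) (hvmem f hf0))
  -- U equals the level of the next value
  have hUnext : ∀ γ γ' : I, γ' ∈ ΓF → γ < γ' → (∀ γ'' ∈ ΓF, γ < γ'' → γ' ≤ γ'') →
      U γ = W γ' := by
    intro γ γ' hγ' hlt hminimal
    refine le_antisymm (iSup₂_le fun β hβ => ?_) ?_
    · intro f hf
      by_cases hf0 : f = 0
      · rw [hf0]; exact (W γ').zero_mem
      rcases (mem_W f β).1 hf with h0 | hge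
      · exact absurd h0 hf0
      · exact (mem_W f γ').2
          (Or.inr (hminimal (v f) (hvmem f hf0) (lt_of_lt_of_le hβ hge)))
    · exact le_iSup₂ (f := fun β (_ : β ∈ {β : I | γ < β}) => W β) γ' hlt
  -- off the value set, W α = U α, hence d α = 0
  have hdzero : ∀ α : I, α ∉ ΓF → d α = 0 := by
    intro α hα
    have hUW : U α = W α := by
      by_cases hex : ∃ γ ∈ ΓF, α ≤ γ
      · obtain ⟨γ, hγmem, hγle⟩ := hex
        have hne : (ΓF.filter fun γ => α ≤ γ).Nonempty :=
          ⟨γ, Finset.mem_filter.2 ⟨hγmem, hγle⟩⟩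
        set γ₀ := (ΓF.filter fun γ => α ≤ γ).min' hne with hγ₀def
        have hγ₀mem := Finset.min'_mem _ hne
        rw [Finset.mem_filter] at hγ₀mem
        have hαγ₀ : α < γ₀ := lt_of_le_of_ne hγ₀mem.2 (by
          intro h; exact hα (h ▸ hγ₀mem.1))
        refine le_antisymm (U_le_W α) ?_
        intro f hf
        by_cases hf0 : f = 0
        · rw [hf0]; exact (U α).zero_mem
        rcases (mem_W f α).1 hf with h0 | hge
        · exact absurd h0 hf0
        · have hvf : v f ∈ ΓF.filter fun γ => α ≤ γ :=
            Finset.mem_filter.2 ⟨hvmem f hf0, hge⟩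
          have hle : γ₀ ≤ v f := Finset.min'_le _ _ hvf
          have : f ∈ W γ₀ := (mem_W f γ₀).2 (Or.inr hle)
          exact le_iSup₂ (f := fun β (_ : β ∈ {β : I | α < β}) => W β) γ₀ hαγ₀ this
      · push_neg at hex
        have hWbot : W α = ⊥ := by
          refine le_bot_iff.1 ?_
          intro f hf
          by_cases hf0 : f = 0
          · simp [hf0]
          rcases (mem_W f α).1 hf with h0 | hge
          · exact absurd h0 hf0
          · exact absurd hge (not_le.2 (hex (v f) (hvmem f hf0)))
        rw [hWbot]
        exact le_antisymm (le_trans (U_le_W α) hWbot.le) bot_le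
    have h3 := key α
    rw [hUW] at h3
    have h4 : d α + r α = r α := h3
    omega
  have hsupp : Function.support d ⊆ (ΓF : Set I) := by
    intro α hα
    by_contra hmem
    exact hα (hdzero α (by simpa using hmem))
  constructor
  · exact Set.Finite.subset (by exact ΓF.finite_toSet) hsupp
  · rw [finsum_eq_sum_of_support_subset d hsupp]
    rcases ΓF.eq_empty_or_nonempty with he | hne
    · -- V is trivial
      have hsub : ∀ f : V, f = 0 := by
        intro f
        by_contra hf0
        have := hvmem f hf0
        simp [he] at this
      have : Subsingleton V := ⟨fun a b => by rw [hsub a, hsub b]⟩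
      rw [he, Finset.sum_empty, Module.finrank_zero_of_subsingleton]
    · -- telescoping over the value set
      set γ₀ := ΓF.min' hne with hγ₀def
      have hγ₀mem : γ₀ ∈ ΓF := Finset.min'_mem _ hne
      have hWtop : W γ₀ = ⊤ := by
        refine le_antisymm le_top ?_
        intro f _
        by_cases hf0 : f = 0
        · rw [hf0]; exact (W γ₀).zero_mem
        · exact (mem_W f γ₀).2 (Or.inr (Finset.min'_le _ _ (hvmem f hf0)))
      have hrtop : r γ₀ = Module.finrank k V := by
        have h1 : r γ₀ = Module.finrank k (W γ₀) := rfl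
        rw [h1, hWtop]
        exact finrank_top k V
      rw [← hrtop]
      refine tele_aux d r ΓF.card ΓF le_rfl ?_ ?_ γ₀ hγ₀mem ?_
      · intro γ hγ hno
        have := key γ
        rw [hUbot γ hno] at this
        simpa using this
      · intro γ _ γ' hγ' hlt hmin'
        have := key γ
        rw [hUnext γ γ' hγ' hlt (fun γ'' h'' hlt' => hmin' γ'' h'' hlt')] at this
        exact this
      · intro γ hγ
        exact Finset.min'_le _ _ hγ
end

section
/- Let v: V \ {0} → I be a prevaluation with one-dimensional leaves on a vector space V over a field k, and let W ⊆ V be a nonzero finite-dimensional subspace. Then the cardinality of v(W \ {0}) equals dim_k W. -/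
/-!
Nonzero vectors with pairwise distinct values are linearly independent: in a vanishing linear
combination, the term of least value would be the only one outside `V_{>α}`, so the sum could not
vanish. Conversely, pick one vector of `W` for each value in `v(W \ {0})`. If some `g ∈ W` lay
outside their span, take one of largest value `α`; as the leaf at `α` is a line, subtracting a
multiple of the representative of `α` moves `g` into `V_{>α}` while keeping it outside the span,
contradicting maximality. So these representatives form a basis of `W`.
-/

variable {k V I : Type*} [Field k] [AddCommGroup V] [Module k V] [LinearOrder I]

open Submodule Set

section Prevaluation

variable (v : V → I)
    (hadd : ∀ f g : V, f ≠ 0 → g ≠ 0 → f + g ≠ 0 → min (v f) (v g) ≤ v (f + g))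
    (hsmul : ∀ (c : k) (f : V), c ≠ 0 → f ≠ 0 → v (c • f) = v f)

def strictLevelSubmodule (α : I) : Submodule k V where
  carrier := {f | f = 0 ∨ α < v f}
  zero_mem' := Or.inl rfl
  add_mem' {a b} ha hb := by
    by_cases ha0 : a = 0
    · simpa [ha0] using hb
    by_cases hb0 : b = 0
    · simpa [hb0] using ha
    by_cases hab : a + b = 0
    · exact Or.inl hab
    · exact Or.inr <| (lt_min (ha.resolve_left ha0) (hb.resolve_left hb0)).trans_le
        (hadd a b ha0 hb0 hab)
  smul_mem' c f hf := by
    by_cases hc : c = 0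
    · simp [hc]
    by_cases hf0 : f = 0
    · simp [hf0]
    · exact Or.inr ((hsmul c f hc hf0).symm ▸ hf.resolve_left hf0)

variable {v hadd hsmul}

theorem add_ne_zero_of_mem_strictLevelSubmodule {f y : V} (hf : f ≠ 0)
    (hy : y ∈ strictLevelSubmodule v hadd hsmul (v f)) : f + y ≠ 0 := by
  intro h
  rcases hy with rfl | hlt
  · exact hf (by simpa using h)
  · rw [eq_neg_of_add_eq_zero_right h, ← neg_one_smul k f,
      hsmul _ _ (neg_ne_zero.mpr one_ne_zero) hf] at hlt
    exact hlt.false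

theorem iSup_levelSubmodule_le_strictLevelSubmodule (α : I) :
    ⨆ β ∈ {β : I | α < β}, levelSubmodule v hadd hsmul β ≤ strictLevelSubmodule v hadd hsmul α :=
  iSup₂_le fun _ hβ _ hx => hx.imp_right hβ.trans_le

include hadd hsmul in
theorem linearIndependent_of_injective_comp {ι : Type*} {f : ι → V} (hf : ∀ i, f i ≠ 0)
    (hinj : Function.Injective (v ∘ f)) : LinearIndependent k f := by
  classical
  rw [linearIndependent_iff']
  intro s c hsum
  by_contra! hc
  obtain ⟨i, hi, hmin⟩ := (s.filter (c · ≠ 0)).exists_min_image (v ∘ f)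
    (by simpa [Finset.Nonempty] using hc)
  rw [Finset.mem_filter] at hi
  have hrest : ∑ j ∈ s.erase i, c j • f j ∈ strictLevelSubmodule v hadd hsmul (v (c i • f i)) := by
    rw [hsmul _ _ hi.2 (hf i)]
    refine Submodule.sum_mem _ fun j hj => ?_
    obtain ⟨hji, hjs⟩ := Finset.mem_erase.mp hj
    by_cases hcj : c j = 0
    · simp only [hcj, zero_smul, zero_mem]
    · refine Or.inr ?_
      rw [hsmul _ _ hcj (hf j)]
      exact (hmin j (Finset.mem_filter.mpr ⟨hjs, hcj⟩)).lt_of_ne fun h => hji (hinj h).symm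
  exact add_ne_zero_of_mem_strictLevelSubmodule (smul_ne_zero hi.2 (hf i)) hrest
    (by rwa [Finset.add_sum_erase s (fun j => c j • f j) hi.1])

theorem exists_sub_smul_mem_strictLevelSubmodule {α : I}
    (hleaf : Module.rank k (leafQuot v hadd hsmul α) ≤ 1) {f g : V} (hf : f ≠ 0)
    (hfα : v f = α) (hgα : v g = α) : ∃ c : k, g - c • f ∈ strictLevelSubmodule v hadd hsmul α := by
  set N := (⨆ β ∈ {β : I | α < β}, levelSubmodule v hadd hsmul β).comap
    (levelSubmodule v hadd hsmul α).subtype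
  have hN := iSup_levelSubmodule_le_strictLevelSubmodule (hadd := hadd) (hsmul := hsmul) α
  let xf : levelSubmodule v hadd hsmul α := ⟨f, Or.inr hfα.ge⟩
  let xg : levelSubmodule v hadd hsmul α := ⟨g, Or.inr hgα.ge⟩
  have hxf : N.mkQ xf ≠ 0 := by
    rw [mkQ_apply, Ne, Quotient.mk_eq_zero]
    intro h
    rcases hN h with h0 | hlt
    · exact hf h0
    · exact hlt.ne' hfα
  obtain ⟨u, hu⟩ := rank_le_one_iff.mp hleaf
  obtain ⟨a, ha⟩ := hu (N.mkQ xg)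
  obtain ⟨b, hb⟩ := hu (N.mkQ xf)
  have hb0 : b ≠ 0 := by
    rintro rfl
    exact hxf (by rw [← hb, zero_smul])
  refine ⟨a / b, hN (show xg - (a / b) • xf ∈ N from ?_)⟩
  rw [← Quotient.mk_eq_zero, ← mkQ_apply, map_sub, map_smul, ← ha, ← hb, smul_smul,
    div_mul_cancel₀ a hb0, sub_self]

theorem le_of_forall_exists_apply_eq {P W : Submodule k V} (hPW : P ≤ W)
    (hfin : (v '' {f : V | f ∈ W ∧ f ≠ 0}).Finite)
    (hleaf : ∀ α : I, Module.rank k (leafQuot v hadd hsmul α) ≤ 1)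
    (hval : ∀ g ∈ W, g ≠ 0 → ∃ f ∈ P, f ≠ 0 ∧ v f = v g) : W ≤ P := by
  by_contra hWP
  set T := {x : V | x ∈ W ∧ x ∉ P}
  have hT : (v '' T).Finite :=
    hfin.subset (image_mono fun x hx => ⟨hx.1, fun h => hx.2 (h ▸ P.zero_mem)⟩)
  obtain ⟨g₀, hg₀⟩ := SetLike.not_le_iff_exists.mp hWP
  obtain ⟨_, ⟨g, hgT, rfl⟩, hmax⟩ := exists_max_image (v '' T) id hT ⟨_, g₀, hg₀, rfl⟩
  obtain ⟨f, hfP, hf0, hfg⟩ := hval g hgT.1 fun h => hgT.2 (h ▸ P.zero_mem)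
  obtain ⟨c, hc⟩ := exists_sub_smul_mem_strictLevelSubmodule (hleaf (v g)) hf0 hfg rfl
  have hcf : c • f ∈ P := P.smul_mem c hfP
  rcases hc with h0 | hlt
  · exact hgT.2 (sub_eq_zero.mp h0 ▸ hcf)
  · have hT' : g - c • f ∈ T :=
      ⟨sub_mem hgT.1 (hPW hcf), fun h => hgT.2 (by simpa using add_mem h hcf)⟩
    exact (hmax _ ⟨_, hT', rfl⟩).not_gt hlt

end Prevaluation

theorem stmt7_general (v : V → I)
    (hadd : ∀ f g : V, f ≠ 0 → g ≠ 0 → f + g ≠ 0 → min (v f) (v g) ≤ v (f + g))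
    (hsmul : ∀ (c : k) (f : V), c ≠ 0 → f ≠ 0 → v (c • f) = v f)
    (hleaf : ∀ α : I, Module.rank k (leafQuot v hadd hsmul α) ≤ 1)
    (W : Submodule k V) [FiniteDimensional k W] :
    Nat.card (v '' {f : V | f ∈ W ∧ f ≠ 0}) = Module.finrank k W := by
  classical
  set S := v '' {f : V | f ∈ W ∧ f ≠ 0}
  choose r hr hrv using fun s : S => s.2
  have hli : LinearIndependent k r :=
    linearIndependent_of_injective_comp (hadd := hadd) (hsmul := hsmul) (fun s => (hr s).2)
      fun s t h => Subtype.ext ((hrv s).symm.trans (h.trans (hrv t)))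
  have : Finite S :=
    (LinearIndependent.of_comp W.subtype (v := fun s => (⟨r s, (hr s).1⟩ : W))
      hli).finite_of_isNoetherian
  have hle : span k (range r) ≤ W := span_le.mpr (range_subset_iff.mpr fun s => (hr s).1)
  have hspan : span k (range r) = W :=
    hle.antisymm <| le_of_forall_exists_apply_eq hle (toFinite S) hleaf fun g hg hg0 =>
      ⟨r ⟨v g, g, ⟨hg, hg0⟩, rfl⟩, subset_span (mem_range_self _), (hr _).2, hrv _⟩
  have := Fintype.ofFinite S
  rw [Nat.card_eq_fintype_card, ← finrank_span_eq_card hli, hspan]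

/-- if `v` is a prevaluation with one-dimensional leaves on `V` and `W ⊆ V`
is a nonzero finite-dimensional subspace, then the number of values of `v` on `W \ {0}`
equals `dim W`. -/
theorem stmt7 (v : V → I)
    (hadd : ∀ f g : V, f ≠ 0 → g ≠ 0 → f + g ≠ 0 → min (v f) (v g) ≤ v (f + g))
    (hsmul : ∀ (c : k) (f : V), c ≠ 0 → f ≠ 0 → v (c • f) = v f)
    (hleaf : ∀ α : I, Module.rank k (leafQuot v hadd hsmul α) ≤ 1)
    (W : Submodule k V) (hW : W ≠ ⊥) [FiniteDimensional k W] :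
    Nat.card (v '' {f : V | f ∈ W ∧ f ≠ 0}) = Module.finrank k W :=
  stmt7_general v hadd hsmul hleaf W
end

section
/- Let S1, S2 ⊆ Z^n × Z_{≥0} be non-negative semigroups and define their levelwise sum S = S1 ⊕_t S2 by: (x1, h) ⊕_t (x2, h) = (x1 + x2, h), i.e. S ∩ (R^n × {h}) projects to the Minkowski sum of the level-h slices of S1 and S2. Then S is a non-negative semigroup, and the group generated by S is the levelwise sum of the groups generated by S1 and S2. -/
/-- The levelwise sum `X ⊕_t Y` of two subsets of `ℤ^n × ℤ`: at each level `h` (the last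
coordinate) it is the Minkowski sum of the level-`h` slices of `X` and `Y`. -/
def levelwiseSum {n : ℕ} (X Y : Set ((Fin n → ℤ) × ℤ)) : Set ((Fin n → ℤ) × ℤ) :=
  {p | ∃ a b : Fin n → ℤ, (a, p.2) ∈ X ∧ (b, p.2) ∈ Y ∧ p.1 = a + b}

private lemma add_nsmul_mem_aux {M : Type*} [AddCommMonoid M] {S : Set M}
    (hadd : ∀ p ∈ S, ∀ q ∈ S, p + q ∈ S) {x y : M} (hx : x ∈ S) (hy : y ∈ S) :
    ∀ k : ℕ, x + k • y ∈ S := by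
  intro k
  induction k with
  | zero => simpa using hx
  | succ k ih =>
    rw [succ_nsmul, ← add_assoc]
    exact hadd _ ih _ hy

private lemma nsmul_mem_aux {M : Type*} [AddCommMonoid M] {S : Set M}
    (hadd : ∀ p ∈ S, ∀ q ∈ S, p + q ∈ S) {x : M} (hx : x ∈ S) {k : ℕ} (hk : 1 ≤ k) :
    k • x ∈ S := by
  obtain ⟨j, rfl⟩ := Nat.exists_eq_add_of_le hk
  have h := add_nsmul_mem_aux hadd hx hx j
  rwa [show (1 + j) • x = x + j • x by rw [add_nsmul, one_nsmul]]

private lemma pair_smul_mem {n : ℕ} {S : Set ((Fin n → ℤ) × ℤ)}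
    (hadd : ∀ p ∈ S, ∀ q ∈ S, p + q ∈ S) {x : (Fin n → ℤ) × ℤ} (hx : x ∈ S)
    {k : ℕ} (hk : 1 ≤ k) {h : ℤ} (hh : h = (k : ℤ) * x.2) : (k • x.1, h) ∈ S := by
  have hmem := nsmul_mem_aux hadd hx hk
  rw [hh, ← nsmul_eq_mul, show ((k • x.1 : Fin n → ℤ), k • x.2) = k • x from rfl]
  exact hmem

private lemma pair_add_smul_mem {n : ℕ} {S : Set ((Fin n → ℤ) × ℤ)}
    (hadd : ∀ p ∈ S, ∀ q ∈ S, p + q ∈ S) {t s : (Fin n → ℤ) × ℤ} (ht : t ∈ S) (hs : s ∈ S)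
    {k : ℕ} {h : ℤ} (hh : h = t.2 + (k : ℤ) * s.2) : (t.1 + k • s.1, h) ∈ S := by
  have hmem := add_nsmul_mem_aux hadd ht hs k
  rw [hh, ← nsmul_eq_mul, show ((t.1 + k • s.1 : Fin n → ℤ), t.2 + k • s.2) = t + k • s from rfl]
  exact hmem

private lemma closure_eq_diff {M : Type*} [AddCommGroup M] {S : Set M}
    (hne : S.Nonempty) (hadd : ∀ p ∈ S, ∀ q ∈ S, p + q ∈ S) :
    (AddSubgroup.closure S : Set M) = {x | ∃ s ∈ S, ∃ t ∈ S, x = s - t} := by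
  have K : AddSubgroup M :=
    { carrier := {x | ∃ s ∈ S, ∃ t ∈ S, x = s - t}
      zero_mem' := hne.elim fun s hs => ⟨s, hs, s, hs, by abel⟩
      add_mem' := by
        rintro a b ⟨s, hs, t, ht, rfl⟩ ⟨s', hs', t', ht', rfl⟩
        exact ⟨s + s', hadd _ hs _ hs', t + t', hadd _ ht _ ht', by abel⟩
      neg_mem' := by
        rintro a ⟨s, hs, t, ht, rfl⟩
        exact ⟨t, ht, s, hs, by abel⟩ }
  apply Set.Subset.antisymm
  · let K : AddSubgroup M :=
      { carrier := {x | ∃ s ∈ S, ∃ t ∈ S, x = s - t}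
        zero_mem' := hne.elim fun s hs => ⟨s, hs, s, hs, by abel⟩
        add_mem' := by
          rintro a b ⟨s, hs, t, ht, rfl⟩ ⟨s', hs', t', ht', rfl⟩
          exact ⟨s + s', hadd _ hs _ hs', t + t', hadd _ ht _ ht', by abel⟩
        neg_mem' := by
          rintro a ⟨s, hs, t, ht, rfl⟩
          exact ⟨t, ht, s, hs, by abel⟩ }
    have hsub : S ⊆ (K : Set M) := fun s hs => ⟨s + s, hadd _ hs _ hs, s, hs, by abel⟩
    intro x hx
    exact (AddSubgroup.closure_le K).2 hsub hx
  · rintro x ⟨s, hs, t, ht, rfl⟩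
    exact sub_mem (AddSubgroup.subset_closure hs) (AddSubgroup.subset_closure ht)

/-- if `S₁, S₂ ⊆ ℤ^n × ℤ_{≥0}` are non-negative semigroups, then their
levelwise sum `S = S₁ ⊕_t S₂` is a non-negative semigroup, and the group generated by `S`
is the levelwise sum of the groups generated by `S₁` and `S₂`. -/
theorem stmt13 {n : ℕ} (S1 S2 : Set ((Fin n → ℤ) × ℤ))
    (hadd1 : ∀ p ∈ S1, ∀ q ∈ S1, p + q ∈ S1)
    (hadd2 : ∀ p ∈ S2, ∀ q ∈ S2, p + q ∈ S2)
    (hnneg1 : ∀ p ∈ S1, 0 ≤ p.2) (hnneg2 : ∀ p ∈ S2, 0 ≤ p.2)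
    (hpos1 : ∃ p ∈ S1, p.2 ≠ 0) (hpos2 : ∃ p ∈ S2, p.2 ≠ 0) :
    (∀ p ∈ levelwiseSum S1 S2, ∀ q ∈ levelwiseSum S1 S2, p + q ∈ levelwiseSum S1 S2) ∧
    (∀ p ∈ levelwiseSum S1 S2, 0 ≤ p.2) ∧
    (∃ p ∈ levelwiseSum S1 S2, p.2 ≠ 0) ∧
    ((AddSubgroup.closure (levelwiseSum S1 S2) : Set ((Fin n → ℤ) × ℤ)) =
      levelwiseSum (AddSubgroup.closure S1 : Set ((Fin n → ℤ) × ℤ))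
        (AddSubgroup.closure S2 : Set ((Fin n → ℤ) × ℤ))) := by
  obtain ⟨p1, hp1, hp1ne⟩ := hpos1
  obtain ⟨p2, hp2, hp2ne⟩ := hpos2
  have hd1 : 0 < p1.2 := lt_of_le_of_ne (hnneg1 p1 hp1) (Ne.symm hp1ne)
  have hd2 : 0 < p2.2 := lt_of_le_of_ne (hnneg2 p2 hp2) (Ne.symm hp2ne)
  refine ⟨?_, ?_, ?_, ?_⟩
  · -- closed under addition
    rintro p ⟨a, b, ha, hb, hab⟩ q ⟨c, d, hc, hd, hcd⟩
    refine ⟨a + c, b + d, ?_, ?_, ?_⟩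
    · exact hadd1 _ ha _ hc
    · exact hadd2 _ hb _ hd
    · show p.1 + q.1 = (a + c) + (b + d)
      rw [hab, hcd]; abel
  · -- nonnegative
    rintro p ⟨a, b, ha, hb, hab⟩
    exact hnneg1 (a, p.2) ha
  · -- positive element
    refine ⟨((p2.2.toNat) • p1.1 + (p1.2.toNat) • p2.1, p1.2 * p2.2), ?_, ?_⟩
    · refine ⟨(p2.2.toNat) • p1.1, (p1.2.toNat) • p2.1, ?_, ?_, rfl⟩
      · exact pair_smul_mem hadd1 hp1 (by omega) (by rw [Int.toNat_of_nonneg (le_of_lt hd2)]; ring)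
      · exact pair_smul_mem hadd2 hp2 (by omega) (by rw [Int.toNat_of_nonneg (le_of_lt hd1)])
    · have : (0:ℤ) < p1.2 * p2.2 := mul_pos hd1 hd2
      exact fun hzero => by simp only at hzero; omega
  · -- group equality
    apply Set.Subset.antisymm
    · -- closure of levelwise sum ⊆ levelwise sum of closures
      let K : AddSubgroup ((Fin n → ℤ) × ℤ) :=
        { carrier := levelwiseSum (AddSubgroup.closure S1 : Set ((Fin n → ℤ) × ℤ))
            (AddSubgroup.closure S2 : Set ((Fin n → ℤ) × ℤ))
          zero_mem' := ⟨0, 0, zero_mem _, zero_mem _, by simp⟩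
          add_mem' := by
            rintro x y ⟨a, b, ha, hb, hx⟩ ⟨c, d, hc, hd, hy⟩
            refine ⟨a + c, b + d, ?_, ?_, ?_⟩
            · exact add_mem ha hc
            · exact add_mem hb hd
            · show x.1 + y.1 = (a + c) + (b + d)
              rw [hx, hy]; abel
          neg_mem' := by
            rintro x ⟨a, b, ha, hb, hx⟩
            refine ⟨-a, -b, ?_, ?_, ?_⟩
            · exact neg_mem ha
            · exact neg_mem hb
            · show -x.1 = -a + -b
              rw [hx]; abel }
      have hsub : levelwiseSum S1 S2 ⊆ (K : Set ((Fin n → ℤ) × ℤ)) := by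
        rintro x ⟨a, b, ha, hb, hx⟩
        exact ⟨a, b, AddSubgroup.subset_closure ha, AddSubgroup.subset_closure hb, hx⟩
      intro x hx
      exact (AddSubgroup.closure_le K).2 hsub hx
    · -- levelwise sum of closures ⊆ closure of levelwise sum
      rintro x ⟨a, b, ha, hb, hx⟩
      rw [closure_eq_diff ⟨p1, hp1⟩ hadd1] at ha
      rw [closure_eq_diff ⟨p2, hp2⟩ hadd2] at hb
      obtain ⟨s1, hs1, t1, ht1, h1⟩ := ha
      obtain ⟨s2, hs2, t2, ht2, h2⟩ := hb
      have ha1 : a = s1.1 - t1.1 := congrArg Prod.fst h1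
      have hx1 : x.2 = s1.2 - t1.2 := congrArg Prod.snd h1
      have hb1 : b = s2.1 - t2.1 := congrArg Prod.fst h2
      have hx2 : x.2 = s2.2 - t2.2 := congrArg Prod.snd h2
      -- shift so that the top levels are positive
      have hs1' : s1 + p1 ∈ S1 := hadd1 _ hs1 _ hp1
      have ht1' : t1 + p1 ∈ S1 := hadd1 _ ht1 _ hp1
      have hs2' : s2 + p2 ∈ S2 := hadd2 _ hs2 _ hp2
      have ht2' : t2 + p2 ∈ S2 := hadd2 _ ht2 _ hp2
      have hns1 : 0 ≤ s1.2 := hnneg1 _ hs1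
      have hns2 : 0 ≤ s2.2 := hnneg2 _ hs2
      set m1 : ℤ := s1.2 + p1.2 with hm1def
      set m2 : ℤ := s2.2 + p2.2 with hm2def
      have hm1pos : 0 < m1 := by omega
      have hm2pos : 0 < m2 := by omega
      set M1 : ℕ := m1.toNat with hM1def
      set M2 : ℕ := m2.toNat with hM2def
      have hM1 : (M1 : ℤ) = m1 := Int.toNat_of_nonneg (le_of_lt hm1pos)
      have hM2 : (M2 : ℤ) = m2 := Int.toNat_of_nonneg (le_of_lt hm2pos)
      have hM1pos : 1 ≤ M1 := by omega
      have hM2pos : 1 ≤ M2 := by omega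
      have hM1c : ((M1 - 1 : ℕ) : ℤ) = m1 - 1 := by push_cast [hM1pos]; omega
      have hM2c : ((M2 - 1 : ℕ) : ℤ) = m2 - 1 := by push_cast [hM2pos]; omega
      -- the two elements of the levelwise sum
      have hX1 : (M2 • (s1 + p1).1 + M1 • (s2 + p2).1, m1 * m2) ∈ levelwiseSum S1 S2 := by
        refine ⟨M2 • (s1 + p1).1, M1 • (s2 + p2).1, ?_, ?_, rfl⟩
        · exact pair_smul_mem hadd1 hs1' hM2pos (by
            show m1 * m2 = (M2 : ℤ) * (s1.2 + p1.2)
            rw [hM2, ← hm1def]; ring)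
        · exact pair_smul_mem hadd2 hs2' hM1pos (by
            show m1 * m2 = (M1 : ℤ) * (s2.2 + p2.2)
            rw [hM1])
      have hX2 : ((t1 + p1).1 + (M2 - 1) • (s1 + p1).1 + ((t2 + p2).1 + (M1 - 1) • (s2 + p2).1),
          m1 * m2 - x.2) ∈ levelwiseSum S1 S2 := by
        refine ⟨(t1 + p1).1 + (M2 - 1) • (s1 + p1).1,
          (t2 + p2).1 + (M1 - 1) • (s2 + p2).1, ?_, ?_, rfl⟩
        · exact pair_add_smul_mem hadd1 ht1' hs1' (by
            show m1 * m2 - x.2 = (t1.2 + p1.2) + ((M2 - 1 : ℕ) : ℤ) * (s1.2 + p1.2)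
            rw [hM2c, ← hm1def]
            have : t1.2 = s1.2 - x.2 := by omega
            rw [this, hm1def]; ring)
        · exact pair_add_smul_mem hadd2 ht2' hs2' (by
            show m1 * m2 - x.2 = (t2.2 + p2.2) + ((M1 - 1 : ℕ) : ℤ) * (s2.2 + p2.2)
            rw [hM1c, ← hm2def]
            have : t2.2 = s2.2 - x.2 := by omega
            rw [this, hm2def]; ring)
      have hxeq : x = (M2 • (s1 + p1).1 + M1 • (s2 + p2).1, m1 * m2) -
          ((t1 + p1).1 + (M2 - 1) • (s1 + p1).1 + ((t2 + p2).1 + (M1 - 1) • (s2 + p2).1),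
            m1 * m2 - x.2) := by
        have e1 : M1 • (s2 + p2).1 = (M1 - 1) • (s2 + p2).1 + (s2 + p2).1 := by
          rw [← succ_nsmul, Nat.sub_add_cancel hM1pos]
        have e2 : M2 • (s1 + p1).1 = (M2 - 1) • (s1 + p1).1 + (s1 + p1).1 := by
          rw [← succ_nsmul, Nat.sub_add_cancel hM2pos]
        apply Prod.ext
        · show x.1 = _
          rw [hx, ha1, hb1, e1, e2]
          show s1.1 - t1.1 + (s2.1 - t2.1) =
            ((M2 - 1) • (s1 + p1).1 + (s1.1 + p1.1) + ((M1 - 1) • (s2 + p2).1 + (s2.1 + p2.1))) -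
            (t1.1 + p1.1 + (M2 - 1) • (s1 + p1).1 + (t2.1 + p2.1 + (M1 - 1) • (s2 + p2).1))
          abel
        · show x.2 = m1 * m2 - (m1 * m2 - x.2)
          ring
      rw [hxeq]
      exact sub_mem (AddSubgroup.subset_closure hX1) (AddSubgroup.subset_closure hX2)
end

section
/- Let S1, S2 ⊆ Z^n × Z_{≥0} be strongly non-negative semigroups with almost all levels (m(S1) = m(S2) = 1) and let S = S1 ⊕_t S2 be their levelwise sum. Let Δ_0(S_i) ⊆ R^n denote the projection to R^n of the Newton-Okounkov body Δ(S_i) = Con(S_i) ∩ π^{-1}(1). Then Δ_0(S) equals the Minkowski sum Δ_0(S1) + Δ_0(S2). -/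
/-!
For a semigroup `S`, `Δ₀(S)` is the closure of the points `a / h` with `(a, h) ∈ S`, `h > 0`:
rounding the coefficients of a point of the cone down to multiples of `1 / N` approximates it
by `(1 / N)`-multiples of elements of `S`. For the levelwise sum these normalized points are
exactly the sums of normalized points of `S₁` and `S₂`, after moving two points to a common
level by multiplying them by positive integers. Finally `closure (A + B) = closure A + closure B`
as soon as `closure A` is compact, and `Δ₀(S₁)` is compact because the cone of `S₁` meets level
zero only at the origin.
-/

open Pointwise

/-- The coercion of an integral point of `ℤ^n × ℤ` into `ℝ^n × ℝ`. -/
def intCastPt {n : ℕ} (p : (Fin n → ℤ) × ℤ) : (Fin n → ℝ) × ℝ :=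
  (fun i => (p.1 i : ℝ), (p.2 : ℝ))

/-- The Newton–Okounkov body of a non-negative semigroup (with `m(S) = 1`) projected to
`ℝ^n`: the level-1 slice of the closed convex cone generated by `S`. -/
def NObody0 {n : ℕ} (S : Set ((Fin n → ℤ) × ℤ)) : Set (Fin n → ℝ) :=
  {y | ((y, (1 : ℝ)) : (Fin n → ℝ) × ℝ) ∈ coneGen (intCastPt '' S)}

open Filter Topology

section ConeGen

variable {V : Type*} [AddCommGroup V] [Module ℝ V] [TopologicalSpace V]

lemma smul_mem_coneGen_of_mem {T : Set V} {v : V} (hv : v ∈ T) {r : ℝ} (hr : 0 ≤ r) :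
    r • v ∈ coneGen T := by
  classical
  exact subset_closure ⟨{v}, fun _ => r, by simpa using hv, fun _ _ => hr, by simp⟩

lemma smul_mem_coneGen [ContinuousConstSMul ℝ V] {T : Set V} {x : V} (hx : x ∈ coneGen T)
    {r : ℝ} (hr : 0 ≤ r) : r • x ∈ coneGen T := by
  refine map_mem_closure (continuous_const_smul r) hx ?_
  rintro _ ⟨s, c, hsT, hc, rfl⟩
  exact ⟨s, fun v => r * c v, hsT, fun v hv => mul_nonneg hr (hc v hv),
    by simp only [Finset.smul_sum, mul_smul]⟩

end ConeGen

lemma tendsto_sum_floor_mul_div_smul {ι V : Type*} [AddCommMonoid V] [Module ℝ V]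
    [TopologicalSpace V] [ContinuousAdd V] [ContinuousSMul ℝ V] (s : Finset ι) (c : ι → ℝ)
    (v : ι → V) (hc : ∀ i ∈ s, 0 ≤ c i) :
    Tendsto (fun N : ℕ => ∑ i ∈ s, ((⌊c i * N⌋₊ : ℝ) / N) • v i) atTop
      (𝓝 (∑ i ∈ s, c i • v i)) :=
  tendsto_finsetSum s fun i hi =>
    ((tendsto_nat_floor_mul_div_atTop (hc i hi)).comp tendsto_natCast_atTop_atTop).smul_const _

lemma isBounded_levelOne_of_cone {E : Type*} [NormedAddCommGroup E] [NormedSpace ℝ E]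
    [ProperSpace E] {C : Set (E × ℝ)} (hC : IsClosed C)
    (hsmul : ∀ x ∈ C, ∀ r : ℝ, 0 ≤ r → r • x ∈ C) (hlevel : ∀ x ∈ C, x.2 = 0 → x = 0) :
    Bornology.IsBounded {y | (y, (1 : ℝ)) ∈ C} := by
  -- the level `|x.2|` is bounded below by some `ε > 0` on the compact set `C ∩ sphere 0 1`
  obtain ⟨ε, hε, hεle⟩ := ((isCompact_sphere (0 : E × ℝ) 1).inter_left hC).exists_forall_le'
    continuous_snd.abs.continuousOn fun x hx => abs_pos.2 fun h => by
      simpa [hlevel x hx.1 h] using hx.2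
  refine (Metric.isBounded_closedBall (x := 0) (r := ε⁻¹)).subset fun y hy => ?_
  set x : E × ℝ := (y, 1) with hxy
  have hx : 0 < ‖x‖ := norm_pos_iff.2 fun h => by simpa [hxy] using congrArg Prod.snd h
  have hlow := hεle (‖x‖⁻¹ • x) ⟨hsmul _ hy _ (inv_nonneg.2 hx.le), by
    rw [mem_sphere_zero_iff_norm, norm_smul, norm_inv, norm_norm, inv_mul_cancel₀ hx.ne']⟩
  rw [Prod.smul_snd, smul_eq_mul, hxy, mul_one, ← hxy, abs_of_pos (inv_pos.2 hx),
    le_inv_comm₀ hε hx] at hlow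
  simpa using (norm_fst_le x).trans hlow

lemma closure_add_eq_of_isCompact_closure {G : Type*} [AddGroup G] [TopologicalSpace G]
    [IsTopologicalAddGroup G] {s t : Set G} (hs : IsCompact (closure s)) :
    closure (s + t) = closure s + closure t := by
  refine (closure_minimal (Set.add_subset_add subset_closure subset_closure)
    (isClosed_closure.add_left_of_isCompact hs)).antisymm ?_
  rintro _ ⟨x, hx, y, hy, rfl⟩
  exact map_mem_closure₂ continuous_add hx hy fun a ha b hb => Set.add_mem_add ha hb

lemma eq_zero_or_mem_of_mem_addSubmonoidClosure {M : Type*} [AddMonoid M] {S : Set M}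
    (hadd : ∀ p ∈ S, ∀ q ∈ S, p + q ∈ S) {p : M} (hp : p ∈ AddSubmonoid.closure S) :
    p = 0 ∨ p ∈ S := by
  induction hp using AddSubmonoid.closure_induction with
  | mem p hp => exact Or.inr hp
  | zero => exact Or.inl rfl
  | add p q _ _ hp hq =>
    rcases hp with rfl | hp
    · simpa using hq
    rcases hq with rfl | hq
    · simpa using Or.inr hp
    exact Or.inr (hadd p hp q hq)

lemma nsmul_mem_of_add_mem {M : Type*} [AddMonoid M] {S : Set M}
    (hadd : ∀ p ∈ S, ∀ q ∈ S, p + q ∈ S) {p : M} (hp : p ∈ S) {m : ℕ} (hm : 0 < m) :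
    m • p ∈ S := by
  induction m, hm using Nat.le_induction with
  | base => simpa using hp
  | succ m _ ih => simpa [succ_nsmul] using hadd _ ih _ hp

noncomputable def dehomogenize {E : Type*} [AddCommGroup E] [Module ℝ E] (x : E × ℝ) : E :=
  x.2⁻¹ • x.1

section Dehomogenize

variable {E : Type*} [AddCommGroup E] [Module ℝ E]

lemma dehomogenize_smul (x : E × ℝ) {r : ℝ} (hr : r ≠ 0) :
    dehomogenize (r • x) = dehomogenize x := by
  simp only [dehomogenize, Prod.smul_fst, Prod.smul_snd, smul_eq_mul, mul_inv_rev, smul_smul,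
    mul_assoc, inv_mul_cancel₀ hr, mul_one]

lemma mk_dehomogenize_one {x : E × ℝ} (hx : x.2 ≠ 0) : (dehomogenize x, (1 : ℝ)) = x.2⁻¹ • x :=
  Prod.ext rfl (inv_mul_cancel₀ hx).symm

lemma continuousAt_dehomogenize [TopologicalSpace E] [ContinuousSMul ℝ E] {x : E × ℝ}
    (hx : x.2 ≠ 0) : ContinuousAt dehomogenize x :=
  (continuous_snd.continuousAt.inv₀ hx).smul continuous_fst.continuousAt

end Dehomogenize

section IntegralPoints

variable {n : ℕ}

def intCastPtHom : (Fin n → ℤ) × ℤ →+ (Fin n → ℝ) × ℝ :=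
  AddMonoidHom.mk' intCastPt fun p q => by
    ext <;> simp [intCastPt]

lemma intCastPtHom_apply (p : (Fin n → ℤ) × ℤ) : intCastPtHom p = intCastPt p := rfl

def normalizedPoints (S : Set ((Fin n → ℤ) × ℤ)) : Set (Fin n → ℝ) :=
  {y | ∃ p ∈ S, 0 < p.2 ∧ dehomogenize (intCastPt p) = y}

lemma isClosed_NObody0 (S : Set ((Fin n → ℤ) × ℤ)) : IsClosed (NObody0 S) :=
  isClosed_closure.preimage (continuous_id.prodMk continuous_const)

lemma isCompact_NObody0 {S : Set ((Fin n → ℤ) × ℤ)}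
    (hlevel : ∀ x ∈ coneGen (intCastPt '' S), x.2 = 0 → x = 0) : IsCompact (NObody0 S) :=
  Metric.isCompact_of_isClosed_isBounded (isClosed_NObody0 S)
    (isBounded_levelOne_of_cone isClosed_closure (fun _ hx _ hr => smul_mem_coneGen hx hr)
      hlevel)

lemma normalizedPoints_subset_NObody0 (S : Set ((Fin n → ℤ) × ℤ)) :
    normalizedPoints S ⊆ NObody0 S := by
  rintro _ ⟨p, hp, hpos, rfl⟩
  have hpos' : (0 : ℝ) < (intCastPt p).2 := Int.cast_pos.2 hpos
  change (dehomogenize (intCastPt p), (1 : ℝ)) ∈ coneGen (intCastPt '' S)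
  rw [mk_dehomogenize_one hpos'.ne']
  exact smul_mem_coneGen_of_mem (Set.mem_image_of_mem _ hp) (inv_nonneg.2 hpos'.le)

lemma coneGen_subset_closure_smul_addSubmonoidClosure (S : Set ((Fin n → ℤ) × ℤ)) :
    coneGen (intCastPt '' S) ⊆
      closure {x | ∃ p ∈ AddSubmonoid.closure S, ∃ r : ℝ, 0 ≤ r ∧ x = r • intCastPt p} := by
  refine closure_minimal ?_ isClosed_closure
  rintro _ ⟨s, c, hsT, hc, rfl⟩
  choose! g hgS hgv using fun v (hv : v ∈ s) => hsT hv
  refine mem_closure_of_tendsto (tendsto_sum_floor_mul_div_smul s c id hc)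
    (Eventually.of_forall fun N => ?_)
  refine ⟨∑ v ∈ s, ⌊c v * N⌋₊ • g v,
    sum_mem fun v hv => nsmul_mem (AddSubmonoid.subset_closure (hgS v hv)) _,
    (N : ℝ)⁻¹, inv_nonneg.2 N.cast_nonneg, ?_⟩
  rw [← intCastPtHom_apply, map_sum, Finset.smul_sum]
  refine Finset.sum_congr rfl fun v hv => ?_
  rw [map_nsmul, intCastPtHom_apply, hgv v hv, ← Nat.cast_smul_eq_nsmul ℝ, smul_smul,
    div_eq_inv_mul, id]

lemma NObody0_subset_closure_normalizedPoints {S : Set ((Fin n → ℤ) × ℤ)}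
    (hadd : ∀ p ∈ S, ∀ q ∈ S, p + q ∈ S) : NObody0 S ⊆ closure (normalizedPoints S) := by
  intro y hy
  have hopen : IsOpen {x : (Fin n → ℝ) × ℝ | 0 < x.2} :=
    isOpen_lt continuous_const continuous_snd
  have hy' := hopen.inter_closure
    ⟨(one_pos : (0 : ℝ) < 1), coneGen_subset_closure_smul_addSubmonoidClosure S hy⟩
  have hmem := (continuousAt_dehomogenize one_ne_zero).continuousWithinAt.mem_closure_image hy'
  rw [dehomogenize, inv_one, one_smul] at hmem
  refine closure_mono ?_ hmem
  rintro _ ⟨_, ⟨hpos, p, hp, r, hr, rfl⟩, rfl⟩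
  replace hpos : (0 : ℝ) < r * p.2 := hpos
  have hp2 : (0 : ℝ) < p.2 := pos_of_mul_pos_right hpos hr
  have hr' : 0 < r := pos_of_mul_pos_left hpos hp2.le
  have hp0 : p ≠ 0 := fun h => by simp [h] at hp2
  exact ⟨p, (eq_zero_or_mem_of_mem_addSubmonoidClosure hadd hp).resolve_left hp0,
    Int.cast_pos.1 hp2, (dehomogenize_smul _ hr'.ne').symm⟩

lemma NObody0_eq_closure_normalizedPoints {S : Set ((Fin n → ℤ) × ℤ)}
    (hadd : ∀ p ∈ S, ∀ q ∈ S, p + q ∈ S) : NObody0 S = closure (normalizedPoints S) :=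
  (NObody0_subset_closure_normalizedPoints hadd).antisymm
    (closure_minimal (normalizedPoints_subset_NObody0 S) (isClosed_NObody0 S))

lemma dehomogenize_intCastPt_nsmul (p : (Fin n → ℤ) × ℤ) {m : ℕ} (hm : m ≠ 0) :
    dehomogenize (intCastPt (m • p)) = dehomogenize (intCastPt p) := by
  rw [← intCastPtHom_apply, map_nsmul, ← Nat.cast_smul_eq_nsmul ℝ,
    dehomogenize_smul _ (Nat.cast_ne_zero.2 hm), intCastPtHom_apply]

lemma dehomogenize_intCastPt_add_mk (a b : Fin n → ℤ) (h : ℤ) :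
    dehomogenize (intCastPt (a + b, h)) =
      dehomogenize (intCastPt (a, h)) + dehomogenize (intCastPt (b, h)) := by
  ext i
  simp [dehomogenize, intCastPt, mul_add]

lemma add_mem_levelwiseSum {S1 S2 : Set ((Fin n → ℤ) × ℤ)}
    (hadd1 : ∀ p ∈ S1, ∀ q ∈ S1, p + q ∈ S1) (hadd2 : ∀ p ∈ S2, ∀ q ∈ S2, p + q ∈ S2) :
    ∀ p ∈ levelwiseSum S1 S2, ∀ q ∈ levelwiseSum S1 S2, p + q ∈ levelwiseSum S1 S2 := by
  rintro p ⟨a, b, ha, hb, hab⟩ q ⟨a', b', ha', hb', hab'⟩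
  exact ⟨a + a', b + b', hadd1 _ ha _ ha', hadd2 _ hb _ hb', by
    rw [Prod.fst_add, hab, hab']; abel⟩

lemma normalizedPoints_levelwiseSum {S1 S2 : Set ((Fin n → ℤ) × ℤ)}
    (hadd1 : ∀ p ∈ S1, ∀ q ∈ S1, p + q ∈ S1) (hadd2 : ∀ p ∈ S2, ∀ q ∈ S2, p + q ∈ S2) :
    normalizedPoints (levelwiseSum S1 S2) = normalizedPoints S1 + normalizedPoints S2 := by
  apply subset_antisymm
  · rintro _ ⟨⟨c, h⟩, ⟨a, b, ha, hb, rfl : c = a + b⟩, hpos, rfl⟩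
    exact ⟨_, ⟨(a, h), ha, hpos, rfl⟩, _, ⟨(b, h), hb, hpos, rfl⟩,
      (dehomogenize_intCastPt_add_mk a b h).symm⟩
  · rintro _ ⟨_, ⟨⟨a, h⟩, ha, hh, rfl⟩, _, ⟨⟨b, k⟩, hb, hk, rfl⟩, rfl⟩
    lift h to ℕ using hh.le
    lift k to ℕ using hk.le
    have hh' : 0 < h := Int.natCast_pos.1 hh
    have hk' : 0 < k := Int.natCast_pos.1 hk
    -- move both points to the common level `k * h`
    have ha' : (k • a, ((k * h : ℕ) : ℤ)) ∈ S1 := by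
      simpa using nsmul_mem_of_add_mem hadd1 ha hk'
    have hb' : (h • b, ((k * h : ℕ) : ℤ)) ∈ S2 := by
      simpa [mul_comm] using nsmul_mem_of_add_mem hadd2 hb hh'
    refine ⟨(k • a + h • b, ((k * h : ℕ) : ℤ)), ⟨_, _, ha', hb', rfl⟩,
      Int.natCast_pos.2 (Nat.mul_pos hk' hh'), ?_⟩
    rw [dehomogenize_intCastPt_add_mk, ← dehomogenize_intCastPt_nsmul (a, (h : ℤ)) hk'.ne',
      ← dehomogenize_intCastPt_nsmul (b, (k : ℤ)) hh'.ne']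
    simp [mul_comm]

end IntegralPoints

theorem stmt14_general {n : ℕ} (S1 S2 : Set ((Fin n → ℤ) × ℤ))
    (hadd1 : ∀ p ∈ S1, ∀ q ∈ S1, p + q ∈ S1)
    (hadd2 : ∀ p ∈ S2, ∀ q ∈ S2, p + q ∈ S2)
    (hlevel1 : ∀ x ∈ coneGen (intCastPt '' S1), x.2 = 0 → x = 0) :
    NObody0 (levelwiseSum S1 S2) = NObody0 S1 + NObody0 S2 := by
  have hcompact : IsCompact (closure (normalizedPoints S1)) := by
    rw [← NObody0_eq_closure_normalizedPoints hadd1]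
    exact isCompact_NObody0 hlevel1
  rw [NObody0_eq_closure_normalizedPoints (add_mem_levelwiseSum hadd1 hadd2),
    normalizedPoints_levelwiseSum hadd1 hadd2, closure_add_eq_of_isCompact_closure hcompact,
    ← NObody0_eq_closure_normalizedPoints hadd1, ← NObody0_eq_closure_normalizedPoints hadd2]

/-- if `S₁, S₂ ⊆ ℤ^n × ℤ_{≥0}` are strongly non-negative semigroups with
almost all levels (`m(S₁) = m(S₂) = 1`), then the Newton–Okounkov body of the levelwise
sum `S₁ ⊕_t S₂` is the Minkowski sum of the Newton–Okounkov bodies of `S₁` and `S₂`. -/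
theorem stmt14 {n : ℕ} (S1 S2 : Set ((Fin n → ℤ) × ℤ))
    (hadd1 : ∀ p ∈ S1, ∀ q ∈ S1, p + q ∈ S1)
    (hadd2 : ∀ p ∈ S2, ∀ q ∈ S2, p + q ∈ S2)
    (hnneg1 : ∀ p ∈ S1, 0 ≤ p.2) (hnneg2 : ∀ p ∈ S2, 0 ≤ p.2)
    (hpos1 : ∃ p ∈ S1, p.2 ≠ 0) (hpos2 : ∃ p ∈ S2, p.2 ≠ 0)
    (hline1 : ∀ x ∈ coneGen (intCastPt '' S1), -x ∈ coneGen (intCastPt '' S1) → x = 0)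
    (hline2 : ∀ x ∈ coneGen (intCastPt '' S2), -x ∈ coneGen (intCastPt '' S2) → x = 0)
    (hlevel1 : ∀ x ∈ coneGen (intCastPt '' S1), x.2 = 0 → x = 0)
    (hlevel2 : ∀ x ∈ coneGen (intCastPt '' S2), x.2 = 0 → x = 0)
    (hm1 : AddSubgroup.map (AddMonoidHom.snd (Fin n → ℤ) ℤ) (AddSubgroup.closure S1) = ⊤)
    (hm2 : AddSubgroup.map (AddMonoidHom.snd (Fin n → ℤ) ℤ) (AddSubgroup.closure S2) = ⊤) :
    NObody0 (levelwiseSum S1 S2) = NObody0 S1 + NObody0 S2 :=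
  stmt14_general S1 S2 hadd1 hadd2 hlevel1
end

section
/- Let X be an irreducible complex algebraic surface and let L, M be nonzero finite-dimensional subspaces of the field of rational functions on X, with [·,·] the birational intersection index. Then [L,L]·[M,M] ≤ [L,M]^2. -/
/-- a version of the Hodge inequality: let `F = ℂ(X)` be the field of
rational functions of an irreducible complex surface and `ind` the birational
intersection index on pairs of nonzero finite-dimensional subspaces of `F`.  The index is
nonnegative, symmetric, multilinear with respect to the product of subspaces (so that
`[LM, LM] = [L,L] + 2[L,M] + [M,M]`), and satisfies the Brunn–Minkowski inequality
`[L,L]^{1/2} + [M,M]^{1/2} ≤ [LM,LM]^{1/2}`.  Then `[L,L]·[M,M] ≤ [L,M]²`. -/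
theorem stmt18 {F : Type*} [Field F] [Algebra ℂ F]
    (ind : Submodule ℂ F → Submodule ℂ F → ℝ)
    (hnonneg : ∀ L M : Submodule ℂ F, 0 ≤ ind L M)
    (hsymm : ∀ L M : Submodule ℂ F, ind L M = ind M L)
    (hexpand : ∀ L M : Submodule ℂ F, L ≠ ⊥ → FiniteDimensional ℂ L →
      M ≠ ⊥ → FiniteDimensional ℂ M →
      ind (L * M) (L * M) = ind L L + 2 * ind L M + ind M M)
    (hBM : ∀ L M : Submodule ℂ F, L ≠ ⊥ → FiniteDimensional ℂ L →
      M ≠ ⊥ → FiniteDimensional ℂ M →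
      Real.sqrt (ind L L) + Real.sqrt (ind M M) ≤ Real.sqrt (ind (L * M) (L * M)))
    (L M : Submodule ℂ F) (hL : L ≠ ⊥) (hM : M ≠ ⊥)
    [FiniteDimensional ℂ L] [FiniteDimensional ℂ M] :
    ind L L * ind M M ≤ (ind L M) ^ 2 := by
  set a := ind L L with ha
  set b := ind M M with hb
  set c := ind L M with hc
  have h0a : 0 ≤ a := hnonneg L L
  have h0b : 0 ≤ b := hnonneg M M
  have h0c : 0 ≤ c := hnonneg L M
  have hbm := hBM L M hL ‹_› hM ‹_›
  rw [hexpand L M hL ‹_› hM ‹_›] at hbm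
  have hsq : (Real.sqrt a + Real.sqrt b) ^ 2 ≤ a + 2 * c + b := by
    have h1 : (Real.sqrt (a + 2 * c + b)) ^ 2 = a + 2 * c + b :=
      Real.sq_sqrt (by linarith)
    calc (Real.sqrt a + Real.sqrt b) ^ 2
        ≤ (Real.sqrt (a + 2 * c + b)) ^ 2 := by
          apply pow_le_pow_left₀ (by positivity) hbm
      _ = a + 2 * c + b := h1
  have hab : Real.sqrt a * Real.sqrt b ≤ c := by
    have h2 : (Real.sqrt a) ^ 2 = a := Real.sq_sqrt h0a
    have h3 : (Real.sqrt b) ^ 2 = b := Real.sq_sqrt h0b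
    nlinarith [hsq]
  calc a * b = (Real.sqrt a * Real.sqrt b) ^ 2 := by
        rw [mul_pow, Real.sq_sqrt h0a, Real.sq_sqrt h0b]
    _ ≤ c ^ 2 := pow_le_pow_left₀ (by positivity) hab 2
end
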